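/- arXiv:1912.08972 — 11 statements merged into one kernel-verified Lean document; each statement's English description precedes it below -/
import Mathlib

section
/- If there exists a Hadamard matrix of order n, then there exists a complete set of (n-1)^2 mutually orthogonal binary frequency squares of type F(n; n/2). -/
/-- A binary frequency square of type F(n; n/2): an n×n {0,1}-matrix with
exactly n/2 ones in every row and every column. -/
def IsFreqSquare (n : ℕ) (F : Fin n → Fin n → Fin 2) : Prop :=
  (∀ r : Fin n, (Finset.univ.filter fun c => F r c = 1).card = n / 2) ∧
  (∀ c : Fin n, (Finset.univ.filter fun r => F r c = 1).card = n / 2)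

/-- Two binary frequency squares are orthogonal if each ordered pair of symbols
occurs exactly n^2/4 times when the squares are superimposed. -/
def OrthFS (n : ℕ) (F G : Fin n → Fin n → Fin 2) : Prop :=
  ∀ a b : Fin 2,
    (Finset.univ.filter fun p : Fin n × Fin n =>
      F p.1 p.2 = a ∧ G p.1 p.2 = b).card = n ^ 2 / 4

/-- A set of k mutually orthogonal binary frequency squares of order n. -/
def IsMOFS (n k : ℕ) (F : Fin k → Fin n → Fin n → Fin 2) : Prop :=
  (∀ i, IsFreqSquare n (F i)) ∧ ∀ i j, i ≠ j → OrthFS n (F i) (F j)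


/-!
Multiplying every column of the Hadamard matrix `H` by its entry in the first row keeps the rows
`±1`-valued and pairwise orthogonal, makes the first row all ones, and hence gives every other row
`x_i` zero sum. For any two such rows the `±1` square `x_i x_jᵀ` has zero row and column sums, so
reading `1 ↦ 1, -1 ↦ 0` gives a frequency square; this yields `(n - 1)²` squares. For `±1`-valued
`S`, `T` the number of positions where `S = s` and `T = t` is
`(n² + s ΣS + t ΣT + st Σ S∘T) / 4`, and for the squares of two different pairs `(i, j) ≠ (i', j')`
all three sums vanish, since `Σ S∘T = ⟨x_i, x_i'⟩ ⟨x_j, x_j'⟩`.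
-/

open Finset

section SignCounting

variable {α : Type*} [Fintype α]

lemma two_mul_ite_eq_one_add_mul {x s : ℤ} (hx : x = 1 ∨ x = -1) (hs : s = 1 ∨ s = -1) :
    2 * (if x = s then 1 else 0 : ℤ) = 1 + s * x := by
  rcases hx with rfl | rfl <;> rcases hs with rfl | rfl <;> norm_num

lemma two_mul_card_filter_eq {f : α → ℤ} (hf : ∀ a, f a = 1 ∨ f a = -1) {s : ℤ}
    (hs : s = 1 ∨ s = -1) :
    2 * (#{a | f a = s} : ℤ) = Fintype.card α + s * ∑ a, f a := by
  rw [natCast_card_filter, mul_sum,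
    sum_congr rfl fun a _ => two_mul_ite_eq_one_add_mul (hf a) hs, sum_add_distrib, ← mul_sum]
  simp

lemma four_mul_card_filter_eq_and {f g : α → ℤ} (hf : ∀ a, f a = 1 ∨ f a = -1)
    (hg : ∀ a, g a = 1 ∨ g a = -1) {s t : ℤ} (hs : s = 1 ∨ s = -1) (ht : t = 1 ∨ t = -1) :
    4 * (#{a | f a = s ∧ g a = t} : ℤ)
      = Fintype.card α + s * ∑ a, f a + t * ∑ a, g a + s * t * ∑ a, f a * g a := by
  have indicator (a : α) :
      4 * (if f a = s ∧ g a = t then 1 else 0 : ℤ) = (1 + s * f a) * (1 + t * g a) := by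
    rw [← two_mul_ite_eq_one_add_mul (hf a) hs, ← two_mul_ite_eq_one_add_mul (hg a) ht]
    split_ifs <;> simp_all
  rw [natCast_card_filter, mul_sum, sum_congr rfl fun a _ => indicator a]
  simp only [add_mul, one_mul, mul_add, mul_one, sum_add_distrib, sum_const, card_univ,
    nsmul_eq_mul, mul_sum]
  ring_nf

end SignCounting

section OfSign

variable {n : ℕ}

def ofSign (S : Fin n → Fin n → ℤ) : Fin n → Fin n → Fin 2 :=
  fun r c => if S r c = 1 then 1 else 0

def signOf (a : Fin 2) : ℤ := if a = 1 then 1 else -1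

lemma signOf_eq (a : Fin 2) : signOf a = 1 ∨ signOf a = -1 := by
  unfold signOf; split_ifs <;> simp

lemma ofSign_eq_iff {S : Fin n → Fin n → ℤ} {r c : Fin n} (hS : S r c = 1 ∨ S r c = -1)
    (a : Fin 2) : ofSign S r c = a ↔ S r c = signOf a := by
  unfold ofSign signOf
  fin_cases a <;> rcases hS with h | h <;> simp [h]

lemma isFreqSquare_ofSign {S : Fin n → Fin n → ℤ} (hS : ∀ r c, S r c = 1 ∨ S r c = -1)
    (hrow : ∀ r, ∑ c, S r c = 0) (hcol : ∀ c, ∑ r, S r c = 0) :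
    IsFreqSquare n (ofSign S) := by
  have half {f : Fin n → ℤ} (hf : ∀ a, f a = 1 ∨ f a = -1) (h0 : ∑ a, f a = 0) :
      #{a | f a = 1} = n / 2 := by
    have := two_mul_card_filter_eq hf (s := 1) (.inl rfl)
    rw [h0, Fintype.card_fin] at this
    omega
  refine ⟨fun r => ?_, fun c => ?_⟩
  · simpa [ofSign] using half (hS r) (hrow r)
  · simpa [ofSign] using half (hS · c) (hcol c)

lemma orthFS_ofSign {S T : Fin n → Fin n → ℤ} (hS : ∀ r c, S r c = 1 ∨ S r c = -1)
    (hT : ∀ r c, T r c = 1 ∨ T r c = -1) (hS0 : ∑ p : Fin n × Fin n, S p.1 p.2 = 0)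
    (hT0 : ∑ p : Fin n × Fin n, T p.1 p.2 = 0)
    (hST : ∑ p : Fin n × Fin n, S p.1 p.2 * T p.1 p.2 = 0) :
    OrthFS n (ofSign S) (ofSign T) := by
  intro a b
  have := four_mul_card_filter_eq_and (fun p : Fin n × Fin n => hS p.1 p.2)
    (fun p => hT p.1 p.2) (signOf_eq a) (signOf_eq b)
  rw [hS0, hT0, hST, Fintype.card_prod, Fintype.card_fin] at this
  simp only [ofSign_eq_iff (hS _ _), ofSign_eq_iff (hT _ _)]
  generalize #{p : Fin n × Fin n | S p.1 p.2 = signOf a ∧ T p.1 p.2 = signOf b} = k at this ⊢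
  rw [sq]
  omega

end OfSign

section VecMulVec

variable {n : ℕ}

lemma sum_prod_mul_eq_mul_sum (x y : Fin n → ℤ) :
    ∑ p : Fin n × Fin n, x p.1 * y p.2 = (∑ r, x r) * ∑ c, y c := by
  rw [Fintype.sum_prod_type, sum_mul_sum]

variable {x y u v : Fin n → ℤ}

lemma vecMulVec_eq_sign (hx : ∀ r, x r = 1 ∨ x r = -1) (hy : ∀ c, y c = 1 ∨ y c = -1)
    (r c : Fin n) : Matrix.vecMulVec x y r c = 1 ∨ Matrix.vecMulVec x y r c = -1 := by
  rw [Matrix.vecMulVec_apply]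
  rcases hx r with h | h <;> rcases hy c with h' | h' <;> simp [h, h']

lemma isFreqSquare_ofSign_vecMulVec (hx : ∀ r, x r = 1 ∨ x r = -1)
    (hy : ∀ c, y c = 1 ∨ y c = -1) (hx0 : ∑ r, x r = 0) (hy0 : ∑ c, y c = 0) :
    IsFreqSquare n (ofSign (Matrix.vecMulVec x y)) :=
  isFreqSquare_ofSign (vecMulVec_eq_sign hx hy)
    (fun r => by simp [Matrix.vecMulVec_apply, ← mul_sum, hy0])
    (fun c => by simp [Matrix.vecMulVec_apply, ← sum_mul, hx0])

lemma orthFS_ofSign_vecMulVec (hx : ∀ r, x r = 1 ∨ x r = -1) (hy : ∀ c, y c = 1 ∨ y c = -1)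
    (hu : ∀ r, u r = 1 ∨ u r = -1) (hv : ∀ c, v c = 1 ∨ v c = -1) (hx0 : ∑ r, x r = 0)
    (hu0 : ∑ r, u r = 0) (hxu : ∑ r, x r * u r = 0 ∨ ∑ c, y c * v c = 0) :
    OrthFS n (ofSign (Matrix.vecMulVec x y)) (ofSign (Matrix.vecMulVec u v)) := by
  refine orthFS_ofSign (vecMulVec_eq_sign hx hy) (vecMulVec_eq_sign hu hv) ?_ ?_ ?_
  · simp [Matrix.vecMulVec_apply, sum_prod_mul_eq_mul_sum, hx0]
  · simp [Matrix.vecMulVec_apply, sum_prod_mul_eq_mul_sum, hu0]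
  · simp only [Matrix.vecMulVec_apply]
    calc ∑ p : Fin n × Fin n, x p.1 * y p.2 * (u p.1 * v p.2)
        = ∑ p : Fin n × Fin n, x p.1 * u p.1 * (y p.2 * v p.2) :=
          sum_congr rfl fun p _ => mul_mul_mul_comm ..
      _ = (∑ r, x r * u r) * ∑ c, y c * v c :=
          sum_prod_mul_eq_mul_sum (fun r => x r * u r) (fun c => y c * v c)
      _ = 0 := by rcases hxu with h | h <;> simp [h]

end VecMulVec

section Hadamard

variable {n : ℕ} {H : Fin n → Fin n → ℤ}

def hadamardSquare (H : Fin n → Fin n → ℤ) (z i j : Fin n) : Fin n → Fin n → Fin 2 :=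
  ofSign (Matrix.vecMulVec (fun r => H i r * H z r) (fun c => H j c * H z c))

lemma mul_row_eq_sign (hent : ∀ i j, H i j = 1 ∨ H i j = -1) (i z c : Fin n) :
    H i c * H z c = 1 ∨ H i c * H z c = -1 := by
  rcases hent i c with h | h <;> rcases hent z c with h' | h' <;> simp [h, h']

lemma sum_mul_row_mul_mul_row (hent : ∀ i j, H i j = 1 ∨ H i j = -1) (i j z : Fin n) :
    ∑ c, H i c * H z c * (H j c * H z c) = ∑ c, H i c * H j c :=
  sum_congr rfl fun c _ => by rcases hent z c with h | h <;> simp [h]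

lemma isFreqSquare_hadamardSquare (hent : ∀ i j, H i j = 1 ∨ H i j = -1)
    (horth : ∀ i j : Fin n, i ≠ j → ∑ c, H i c * H j c = 0) {z i j : Fin n} (hi : i ≠ z)
    (hj : j ≠ z) :
    IsFreqSquare n (hadamardSquare H z i j) :=
  isFreqSquare_ofSign_vecMulVec (mul_row_eq_sign hent i z) (mul_row_eq_sign hent j z)
    (horth i z hi) (horth j z hj)

lemma orthFS_hadamardSquare (hent : ∀ i j, H i j = 1 ∨ H i j = -1)
    (horth : ∀ i j : Fin n, i ≠ j → ∑ c, H i c * H j c = 0) {z i j i' j' : Fin n} (hi : i ≠ z)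
    (hi' : i' ≠ z) (hne : i ≠ i' ∨ j ≠ j') :
    OrthFS n (hadamardSquare H z i j) (hadamardSquare H z i' j') := by
  refine orthFS_ofSign_vecMulVec (mul_row_eq_sign hent i z) (mul_row_eq_sign hent j z)
    (mul_row_eq_sign hent i' z) (mul_row_eq_sign hent j' z) (horth i z hi) (horth i' z hi') ?_
  simp only [sum_mul_row_mul_mul_row hent]
  exact hne.imp (horth i i') (horth j j')

end Hadamard

lemma isMOFS_comp_equiv {n k : ℕ} {ι : Type*} {G : ι → Fin n → Fin n → Fin 2}
    (hG : ∀ p, IsFreqSquare n (G p)) (hGG : Pairwise fun p q => OrthFS n (G p) (G q))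
    (e : Fin k ≃ ι) : IsMOFS n k (G ∘ e) :=
  ⟨fun i => hG (e i), fun _ _ hij => hGG (e.injective.ne hij)⟩

/-- If there exists a Hadamard matrix of order n, then there exists a complete
set of (n-1)^2 mutually orthogonal binary frequency squares of type F(n; n/2). -/
theorem stmt_0 (n : ℕ) (H : Fin n → Fin n → ℤ)
    (hent : ∀ i j, H i j = 1 ∨ H i j = -1)
    (horth : ∀ i j : Fin n, i ≠ j → ∑ c, H i c * H j c = 0) :
    ∃ F : Fin ((n - 1) ^ 2) → Fin n → Fin n → Fin 2,
      IsMOFS n ((n - 1) ^ 2) F := by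
  cases n with
  | zero => exact ⟨Fin.elim0, fun i => i.elim0, fun i => i.elim0⟩
  | succ m =>
    let G (p : Fin m × Fin m) := hadamardSquare H 0 p.1.succ p.2.succ
    have hfreq (p : Fin m × Fin m) : IsFreqSquare (m + 1) (G p) :=
      isFreqSquare_hadamardSquare hent horth (Fin.succ_ne_zero _) (Fin.succ_ne_zero _)
    have horthFS : Pairwise fun p q => OrthFS (m + 1) (G p) (G q) := by
      rintro ⟨i, j⟩ ⟨i', j'⟩ hne
      refine orthFS_hadamardSquare hent horth (Fin.succ_ne_zero _) (Fin.succ_ne_zero _) ?_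
      simpa only [Ne, Fin.succ_inj, Prod.mk.injEq, not_and_or] using hne
    exact ⟨_, isMOFS_comp_equiv hfreq horthFS
      ((finCongr (by simp [sq])).trans finProdFinEquiv.symm)⟩
end

section
/- A set of k mutually orthogonal binary frequency squares of order n satisfies a non-trivial relation if and only if some non-empty subset of the squares has a Z_2-sum (entrywise sum mod 2) that, up to permutation of rows and columns, consists of four constant blocks [[0,1],[1,0]] (blocks possibly degenerate). -/
/-!
Over `ZMod 2` the indicator of `F i r c ∈ X i` is the affine function
`[0 ∈ X i] + [X i nontrivial] • F i r c` of the entry, so a relation says exactly that the sum of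
the squares with nontrivial `X i` equals `[r ∈ X₁] + [c ∈ X₂] + const`, which is the block shape
`[r ∈ R ↔ c ∈ C]` with `R = X₁` and `C` equal to `X₂` or its complement. That set of squares is
nonempty, since otherwise `[r ∈ X₁] + [c ∈ X₂]` would be constant and all of `X₁`, `X₂`, `X i`
trivial. Conversely a block-shaped sum over `S` gives the relation with `X i = {1}` for `i ∈ S`.
-/

open Finset

section ZModTwo

variable {α ι : Type*} [Fintype α] [DecidableEq α] [Fintype ι]

lemma ZMod.ite_iff_eq_ite_add_ite (p q : Prop) [Decidable p] [Decidable q] :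
    (if (p ↔ q) then (0 : ZMod 2) else 1) = (if p then 1 else 0) + (if q then 1 else 0) := by
  by_cases hp : p <;> by_cases hq : q <;> simp [hp, hq]; decide

lemma ZMod.exists_ite_mem_eq_ite_mem_add (X : Finset α) (a : ZMod 2) :
    ∃ C : Finset α, ∀ c, (if c ∈ C then (1 : ZMod 2) else 0) = (if c ∈ X then 1 else 0) + a := by
  rcases (by decide : ∀ b : ZMod 2, b = 0 ∨ b = 1) a with rfl | rfl
  · exact ⟨X, fun c => (add_zero _).symm⟩
  · refine ⟨Xᶜ, fun c => ?_⟩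
    by_cases hc : c ∈ X <;> simp [hc]; decide

lemma Finset.eq_empty_or_eq_univ_of_ite_add_ite_eq {R C : Finset α} {a : ZMod 2}
    (h : ∀ r c, (if r ∈ R then (1 : ZMod 2) else 0) + (if c ∈ C then 1 else 0) = a) :
    R = ∅ ∨ R = univ := by
  rcases R.eq_empty_or_nonempty with hR | ⟨r₀, hr₀⟩
  · exact .inl hR
  refine .inr (eq_univ_iff_forall.mpr fun r => ?_)
  have hr : (if r ∈ R then (1 : ZMod 2) else 0) = 1 := by
    simpa [hr₀] using (h r r₀).trans (h r₀ r₀).symm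
  by_contra hrR
  simp [hrR] at hr

def nontrivialIndices (X : ι → Finset (Fin 2)) : Finset ι :=
  univ.filter fun i => ¬((0 : Fin 2) ∈ X i ↔ (1 : Fin 2) ∈ X i)

lemma mem_nontrivialIndices {X : ι → Finset (Fin 2)} {i : ι} :
    i ∈ nontrivialIndices X ↔ X i ≠ ∅ ∧ X i ≠ univ := by
  have key : ∀ Y : Finset (Fin 2), (¬((0 : Fin 2) ∈ Y ↔ (1 : Fin 2) ∈ Y)) ↔ Y ≠ ∅ ∧ Y ≠ univ := by
    decide
  simp only [nontrivialIndices, mem_filter, mem_univ, true_and, key]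

lemma Fin.two_ite_mem_eq (x : Fin 2) (Y : Finset (Fin 2)) :
    (if x ∈ Y then (1 : ZMod 2) else 0) =
      (if (0 : Fin 2) ∈ Y then 1 else 0) +
        if ¬((0 : Fin 2) ∈ Y ↔ (1 : Fin 2) ∈ Y) then (x.val : ZMod 2) else 0 := by
  revert x Y; decide

lemma sum_ite_mem_fin_two (x : ι → Fin 2) (X : ι → Finset (Fin 2)) :
    ∑ i, (if x i ∈ X i then (1 : ZMod 2) else 0) =
      ∑ i, (if (0 : Fin 2) ∈ X i then 1 else 0) +
        ∑ i ∈ nontrivialIndices X, ((x i).val : ZMod 2) := by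
  rw [nontrivialIndices, sum_filter, ← sum_add_distrib]
  exact sum_congr rfl fun i _ => Fin.two_ite_mem_eq (x i) (X i)

lemma even_relation_iff (p q : Prop) [Decidable p] [Decidable q] (x : ι → Fin 2)
    (X : ι → Finset (Fin 2)) :
    Even ((if p then 1 else 0) + (if q then 1 else 0) + ∑ i, if x i ∈ X i then 1 else 0) ↔
      ∑ i ∈ nontrivialIndices X, ((x i).val : ZMod 2) =
        (if p then 1 else 0) + (if q then 1 else 0) +
          ∑ i, (if (0 : Fin 2) ∈ X i then 1 else 0) := by
  rw [← ZMod.natCast_eq_zero_iff_even]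
  push_cast
  rw [sum_ite_mem_fin_two, ← CharTwo.add_eq_zero (a := ∑ i ∈ nontrivialIndices X, _)]
  constructor <;> intro h <;> linear_combination h

end ZModTwo

/-- The block structure [[0,1],[1,0]] up to row and column permutations is encoded by a set `R`
of rows and a set `C` of columns: the Z₂-sum is 0 exactly on the cells with `r ∈ R ↔ c ∈ C`. -/
theorem stmt_2_general (n k : ℕ) (F : Fin k → Fin n → Fin n → Fin 2) :
    (∃ (X1 X2 : Finset (Fin n)) (X : Fin k → Finset (Fin 2)),
      (∀ r c : Fin n,
        Even ((if r ∈ X1 then 1 else 0) + (if c ∈ X2 then 1 else 0) +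
          ∑ i, if F i r c ∈ X i then 1 else 0)) ∧
      ((X1 ≠ ∅ ∧ X1 ≠ Finset.univ) ∨ (X2 ≠ ∅ ∧ X2 ≠ Finset.univ) ∨
        ∃ i, X i ≠ ∅ ∧ X i ≠ Finset.univ))
    ↔
    (∃ S : Finset (Fin k), S.Nonempty ∧ ∃ R C : Finset (Fin n),
      ∀ r c : Fin n,
        (∑ i ∈ S, ((F i r c).val : ZMod 2)) =
          if (r ∈ R ↔ c ∈ C) then 0 else 1) := by
  constructor
  · rintro ⟨X1, X2, X, hrel, hnt⟩
    set A : ZMod 2 := ∑ i, if (0 : Fin 2) ∈ X i then 1 else 0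
    have hsum : ∀ r c, ∑ i ∈ nontrivialIndices X, ((F i r c).val : ZMod 2) =
        (if r ∈ X1 then 1 else 0) + (if c ∈ X2 then 1 else 0) + A :=
      fun r c => (even_relation_iff _ _ _ _).1 (hrel r c)
    obtain ⟨C, hC⟩ := ZMod.exists_ite_mem_eq_ite_mem_add X2 A
    refine ⟨nontrivialIndices X, ?_, X1, C, fun r c => ?_⟩
    · rw [nonempty_iff_ne_empty]
      intro hS
      have hconst : ∀ r c, (if r ∈ X1 then (1 : ZMod 2) else 0) + (if c ∈ X2 then 1 else 0) = A :=
        fun r c => CharTwo.add_eq_zero.1 (by simpa [hS] using (hsum r c).symm)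
      rcases hnt with ⟨h1, h2⟩ | ⟨h1, h2⟩ | ⟨i, hi⟩
      · exact (eq_empty_or_eq_univ_of_ite_add_ite_eq hconst).elim h1 h2
      · exact (eq_empty_or_eq_univ_of_ite_add_ite_eq fun c r =>
          (add_comm _ _).trans (hconst r c)).elim h1 h2
      · simpa [hS] using mem_nontrivialIndices.2 hi
    · rw [hsum, add_assoc, ← hC, ZMod.ite_iff_eq_ite_add_ite]
  · rintro ⟨S, ⟨i₀, hi₀⟩, R, C, hS⟩
    set X : Fin k → Finset (Fin 2) := fun i => if i ∈ S then {1} else ∅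
    have hX : nontrivialIndices X = S := by
      ext i
      by_cases hi : i ∈ S <;> simp [nontrivialIndices, X, hi]
    refine ⟨R, C, X, fun r c => (even_relation_iff _ _ _ _).2 ?_, .inr (.inr ⟨i₀, ?_⟩)⟩
    · have h0 : ∀ i, (0 : Fin 2) ∉ X i := fun i => by by_cases hi : i ∈ S <;> simp [X, hi]
      simp only [hX, hS, ZMod.ite_iff_eq_ite_add_ite, h0, if_false, sum_const_zero, add_zero]
    · rw [← mem_nontrivialIndices, hX]
      exact hi₀

/-- A k-MOFS(n) satisfies a non-trivial relation iff some non-empty subset of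
the squares has a Z₂-sum which, up to permutation of rows and columns, has the
block structure [[0,1],[1,0]] (with possibly degenerate blocks); the latter is
expressed by the existence of a set R of rows and a set C of columns such that
the Z₂-sum is 0 exactly on cells (r,c) with r ∈ R ↔ c ∈ C. -/
theorem stmt_2 (n k : ℕ) (F : Fin k → Fin n → Fin n → Fin 2)
    (h : IsMOFS n k F) :
    (∃ (X1 X2 : Finset (Fin n)) (X : Fin k → Finset (Fin 2)),
      (∀ r c : Fin n,
        Even ((if r ∈ X1 then 1 else 0) + (if c ∈ X2 then 1 else 0) +
          ∑ i, if F i r c ∈ X i then 1 else 0)) ∧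
      ((X1 ≠ ∅ ∧ X1 ≠ Finset.univ) ∨ (X2 ≠ ∅ ∧ X2 ≠ Finset.univ) ∨
        ∃ i, X i ≠ ∅ ∧ X i ≠ Finset.univ))
    ↔
    (∃ S : Finset (Fin k), S.Nonempty ∧ ∃ R C : Finset (Fin n),
      ∀ r c : Fin n,
        (∑ i ∈ S, ((F i r c).val : ZMod 2)) =
          if (r ∈ R ↔ c ∈ C) then 0 else 1) :=
  stmt_2_general n k F
end

section
/- Let F be a set of k mutually orthogonal binary frequency squares of order 2λ admitting a full relation (X_1,...,X_{k+2}) with X_c = {1} for c ≥ 3. Then |X_1| ≡ |X_2| ≡ λk (mod 2). -/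
/-- A full relation on a set of k binary frequency squares of order n:
a set X1 of rows and a set X2 of columns (with X_c = {1} for the symbol
columns) such that for every cell (r,c) the quantity
[r ∈ X1] + [c ∈ X2] + Σ_i F_i[r,c] is even. -/
def FullRelation (n k : ℕ) (F : Fin k → Fin n → Fin n → Fin 2)
    (X1 X2 : Finset (Fin n)) : Prop :=
  ∀ r c : Fin n,
    Even ((if r ∈ X1 then 1 else 0) + (if c ∈ X2 then 1 else 0) +
      ∑ i, (F i r c).val)

/-!
Sum the defining parity condition of the relation down a fixed column `c`. The row indicator
contributes `|X₁|`, the column indicator contributes `2λ·[c ∈ X₂]`, which is even, and each of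
the `k` squares contributes its column sum `λ`; hence `|X₁| + λk` is even. Transposing every square
swaps the roles of `X₁` and `X₂`.
-/

open Finset

lemma Fin.sum_val_eq_card_filter_eq_one {ι : Type*} (s : Finset ι) (f : ι → Fin 2) :
    ∑ x ∈ s, (f x : ℕ) = #{x ∈ s | f x = 1} := by
  have hval : ∀ a : Fin 2, (a : ℕ) = if a = 1 then 1 else 0 := by decide
  simp only [hval, sum_boole, Nat.cast_id]

section

variable {n k : ℕ}

lemma IsFreqSquare.transpose {F : Fin n → Fin n → Fin 2} (hF : IsFreqSquare n F) :
    IsFreqSquare n fun r c => F c r :=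
  ⟨hF.2, hF.1⟩

lemma IsFreqSquare.sum_col {F : Fin n → Fin n → Fin 2} (hF : IsFreqSquare n F) (c : Fin n) :
    ∑ r, (F r c : ℕ) = n / 2 := by
  rw [Fin.sum_val_eq_card_filter_eq_one, hF.2 c]

lemma FullRelation.transpose {F : Fin k → Fin n → Fin n → Fin 2} {X1 X2 : Finset (Fin n)}
    (hrel : FullRelation n k F X1 X2) : FullRelation n k (fun i r c => F i c r) X2 X1 :=
  fun r c => by simpa only [add_comm (if c ∈ X1 then 1 else 0)] using hrel c r

lemma FullRelation.even_card_add_mul {F : Fin k → Fin n → Fin n → Fin 2}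
    {X1 X2 : Finset (Fin n)} (hF : ∀ i, IsFreqSquare n (F i))
    (hrel : FullRelation n k F X1 X2) (c : Fin n) :
    Even (#X1 + n * (if c ∈ X2 then 1 else 0) + k * (n / 2)) := by
  have hsum := even_sum (s := univ) _ fun r _ => hrel r c
  rwa [sum_add_distrib, sum_add_distrib, sum_comm, sum_boole, sum_const, card_univ,
    Fintype.card_fin, smul_eq_mul, sum_congr rfl fun i _ => (hF i).sum_col c, sum_const,
    card_univ, Fintype.card_fin, smul_eq_mul, filter_univ_mem, Nat.cast_id] at hsum

lemma FullRelation.card_left_mod_two {lam : ℕ}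
    {F : Fin k → Fin (2 * lam) → Fin (2 * lam) → Fin 2}
    {X1 X2 : Finset (Fin (2 * lam))} (hF : ∀ i, IsFreqSquare (2 * lam) (F i))
    (hrel : FullRelation (2 * lam) k F X1 X2) :
    #X1 % 2 = lam * k % 2 := by
  rcases Nat.eq_zero_or_pos lam with rfl | hlam
  · simp [eq_empty_of_forall_notMem fun r : Fin (2 * 0) => r.elim0]
  obtain ⟨m, hm⟩ := hrel.even_card_add_mul hF ⟨0, by omega⟩
  rw [Nat.mul_div_cancel_left _ two_pos, mul_comm k] at hm
  split_ifs at hm <;> omega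

end

/-- If a k-MOFS(2λ) admits a full relation (X1, X2), then
|X1| ≡ |X2| ≡ λk (mod 2). -/
theorem stmt_3 (lam k : ℕ)
    (F : Fin k → Fin (2 * lam) → Fin (2 * lam) → Fin 2)
    (hmofs : IsMOFS (2 * lam) k F)
    (X1 X2 : Finset (Fin (2 * lam)))
    (hrel : FullRelation (2 * lam) k F X1 X2) :
    X1.card % 2 = (lam * k) % 2 ∧ X2.card % 2 = (lam * k) % 2 :=
  ⟨hrel.card_left_mod_two hmofs.1,
    hrel.transpose.card_left_mod_two fun i => (hmofs.1 i).transpose⟩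
end

section
/- Suppose k and λ are both odd, and F is a set of k mutually orthogonal binary frequency squares of order 2λ satisfying a full relation. Then F is maximal: there is no binary frequency square of type F(2λ; λ) orthogonal to every square in F. -/
theorem sum_mul_modEq_of_modEq_add {ι κ : Type*} [Fintype ι] [Fintype κ] {d m : ℕ}
    {S H : ι → κ → ℕ} {x : ι → ℕ} {y : κ → ℕ} (hS : ∀ r c, S r c ≡ x r + y c [MOD d])
    (hrow : ∀ r, ∑ c, H r c = m) (hcol : ∀ c, ∑ r, H r c = m) :
    ∑ r, ∑ c, S r c * H r c ≡ m * (∑ r, x r + ∑ c, y c) [MOD d] :=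
  calc ∑ r, ∑ c, S r c * H r c ≡ ∑ r, ∑ c, (x r + y c) * H r c [MOD d] := by
        gcongr with r _ c _; exact hS r c
    _ = m * (∑ r, x r + ∑ c, y c) := by
        simp only [add_mul, Finset.sum_add_distrib, ← Finset.mul_sum, hrow]
        rw [Finset.sum_comm]
        simp only [← Finset.mul_sum, hcol, ← Finset.sum_mul]
        ring

theorem sum_sum_sum_mul_comm {ι κ τ R : Type*} [Fintype ι] [Fintype κ] [Fintype τ]
    [NonUnitalNonAssocSemiring R] (F : τ → ι → κ → R) (H : ι → κ → R) :
    ∑ r, ∑ c, (∑ i, F i r c) * H r c = ∑ i, ∑ r, ∑ c, F i r c * H r c := by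
  simp only [Finset.sum_mul]
  exact (Finset.sum_congr rfl fun r _ => Finset.sum_comm).trans Finset.sum_comm

theorem Fin.val_two_eq_ite (v : Fin 2) : v.val = if v = 1 then 1 else 0 := by
  fin_cases v <;> rfl

namespace IsFreqSquare

variable {n : ℕ} {F : Fin n → Fin n → Fin 2}

theorem sum_val_row (hF : IsFreqSquare n F) (r : Fin n) : ∑ c, (F r c).val = n / 2 := by
  simpa only [Finset.card_filter, ← Fin.val_two_eq_ite] using hF.1 r

theorem sum_val_col (hF : IsFreqSquare n F) (c : Fin n) : ∑ r, (F r c).val = n / 2 := by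
  simpa only [Finset.card_filter, ← Fin.val_two_eq_ite] using hF.2 c

theorem sum_val_mul_self (hF : IsFreqSquare n F) :
    ∑ r, ∑ c, (F r c).val * (F r c).val = n * (n / 2) := by
  have val_mul_self (v : Fin 2) : v.val * v.val = v.val := by fin_cases v <;> rfl
  simp only [val_mul_self, hF.sum_val_row, Finset.sum_const, Finset.card_univ,
    Fintype.card_fin, smul_eq_mul]

end IsFreqSquare

theorem OrthFS.sum_val_mul {n : ℕ} {F G : Fin n → Fin n → Fin 2} (h : OrthFS n F G) :
    ∑ r, ∑ c, (F r c).val * (G r c).val = n ^ 2 / 4 := by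
  have val_mul (v w : Fin 2) : v.val * w.val = if v = 1 ∧ w = 1 then 1 else 0 := by
    fin_cases v <;> fin_cases w <;> rfl
  simpa only [Finset.card_filter, Fintype.sum_prod_type, ← val_mul] using h 1 1

theorem FullRelation.sum_val_modEq {n k : ℕ} {F : Fin k → Fin n → Fin n → Fin 2}
    {X1 X2 : Finset (Fin n)} (h : FullRelation n k F X1 X2) (r c : Fin n) :
    ∑ i, (F i r c).val ≡ (if r ∈ X1 then 1 else 0) + (if c ∈ X2 then 1 else 0) [MOD 2] := by
  have := Nat.even_iff.mp (h r c)
  unfold Nat.ModEq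
  omega

/-- If k and λ are both odd and a k-MOFS(2λ) satisfies a full relation,
then it is maximal: no frequency square of type F(2λ;λ) is orthogonal to
every square in the set. -/
theorem stmt_4 (lam k : ℕ) (hlam : Odd lam) (hk : Odd k)
    (F : Fin k → Fin (2 * lam) → Fin (2 * lam) → Fin 2)
    (hmofs : IsMOFS (2 * lam) k F)
    (X1 X2 : Finset (Fin (2 * lam)))
    (hrel : FullRelation (2 * lam) k F X1 X2) :
    ¬ ∃ G : Fin (2 * lam) → Fin (2 * lam) → Fin 2,
        IsFreqSquare (2 * lam) G ∧ ∀ i, OrthFS (2 * lam) (F i) G := by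
  rintro ⟨G, hG, horth⟩
  obtain ⟨i0⟩ : Nonempty (Fin k) := ⟨⟨0, hk.pos⟩⟩
  have half : 2 * lam / 2 = lam := by omega
  have quarter : (2 * lam) ^ 2 / 4 = lam ^ 2 := by rw [mul_pow]; omega
  have weighted (H) (hH : IsFreqSquare (2 * lam) H) :=
    sum_mul_modEq_of_modEq_add (H := fun r c => (H r c).val) hrel.sum_val_modEq
      (fun r => (hH.sum_val_row r).trans half) (fun c => (hH.sum_val_col c).trans half)
  have hG_pairing : ∑ i, ∑ r, ∑ c, (F i r c).val * (G r c).val = k * lam ^ 2 := by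
    simp only [fun i => (horth i).sum_val_mul, quarter, Finset.sum_const, Finset.card_univ,
      Fintype.card_fin, smul_eq_mul]
  have hF_pairing : ∑ i, ∑ r, ∑ c, (F i r c).val * (F i0 r c).val
      = 2 * (lam * lam) + (k - 1) * lam ^ 2 := by
    rw [← Finset.add_sum_erase _ _ (Finset.mem_univ i0), (hmofs.1 i0).sum_val_mul_self, half,
      Finset.sum_congr rfl fun i hi => ((hmofs.2 i i0 (Finset.ne_of_mem_erase hi)).sum_val_mul),
      quarter, Finset.sum_const, Finset.card_erase_of_mem (Finset.mem_univ i0), Finset.card_univ,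
      Fintype.card_fin, smul_eq_mul, mul_assoc]
  have hmod := (weighted G hG).trans (weighted (F i0) (hmofs.1 i0)).symm
  rw [sum_sum_sum_mul_comm, sum_sum_sum_mul_comm, hG_pairing, hF_pairing] at hmod
  have hk_split : k * lam ^ 2 = (k - 1) * lam ^ 2 + lam ^ 2 := by
    nth_rewrite 1 [← Nat.sub_add_cancel hk.pos]; ring
  have hlam_sq : lam ^ 2 % 2 = 1 := Nat.odd_iff.mp hlam.pow
  unfold Nat.ModEq at hmod
  omega
end

section
/- Three binary frequency squares F_1, F_2, F_3 of order 2λ are pairwise orthogonal if and only if in their superposition the counts x_t of each triple t satisfy x_{000}=x_{011}=x_{101}=x_{110} and x_{001}=x_{010}=x_{100}=x_{111}. -/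
/-- The number of cells in which the superposition of three binary squares
shows the triple (a,b,c). -/
def tripleCount (n : ℕ) (F1 F2 F3 : Fin n → Fin n → Fin 2)
    (a b c : Fin 2) : ℕ :=
  (Finset.univ.filter fun p : Fin n × Fin n =>
    F1 p.1 p.2 = a ∧ F2 p.1 p.2 = b ∧ F3 p.1 p.2 = c).card

open Finset

lemma card_filter_eq_card_filter_and_zero_add {α : Type*} (s : Finset α) (P : α → Prop)
    [DecidablePred P] (f : α → Fin 2) :
    #(s.filter P) = #(s.filter fun x => P x ∧ f x = 0) + #(s.filter fun x => P x ∧ f x = 1) := by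
  rw [← filter_filter, ← filter_filter,
    ← card_filter_add_card_filter_not (s := s.filter P) fun x => f x = 0]
  simp only [show ∀ v : Fin 2, ¬v = 0 ↔ v = 1 by omega]

lemma card_filter_prod_eq_mul {α β : Type*} [Fintype α] [Fintype β] (P : α → β → Prop)
    [∀ a, DecidablePred (P a)] {k : ℕ} (h : ∀ a, #{b | P a b} = k) :
    #{p : α × β | P p.1 p.2} = Fintype.card α * k := by
  rw [card_filter, Fintype.sum_prod_type]
  simp only [← card_filter, h, sum_const, card_univ, smul_eq_mul]

section Superposition

variable {n : ℕ} (F1 F2 F3 : Fin n → Fin n → Fin 2)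

def pairCount (F G : Fin n → Fin n → Fin 2) (a b : Fin 2) : ℕ :=
  #{p : Fin n × Fin n | F p.1 p.2 = a ∧ G p.1 p.2 = b}

lemma orthFS_iff_pairCount (F G : Fin n → Fin n → Fin 2) :
    OrthFS n F G ↔ ∀ a b, pairCount F G a b = n ^ 2 / 4 := Iff.rfl

lemma tripleCount_add_tripleCount_last (a b : Fin 2) :
    tripleCount n F1 F2 F3 a b 0 + tripleCount n F1 F2 F3 a b 1 = pairCount F1 F2 a b := by
  rw [pairCount, card_filter_eq_card_filter_and_zero_add _ _ fun p => F3 p.1 p.2]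
  simp only [tripleCount, and_assoc]

lemma tripleCount_add_tripleCount_mid (a c : Fin 2) :
    tripleCount n F1 F2 F3 a 0 c + tripleCount n F1 F2 F3 a 1 c = pairCount F1 F3 a c := by
  rw [pairCount, card_filter_eq_card_filter_and_zero_add _ _ fun p => F2 p.1 p.2]
  simp only [tripleCount, and_assoc, and_comm]

lemma tripleCount_add_tripleCount_first (b c : Fin 2) :
    tripleCount n F1 F2 F3 0 b c + tripleCount n F1 F2 F3 1 b c = pairCount F2 F3 b c := by
  rw [pairCount, card_filter_eq_card_filter_and_zero_add _ _ fun p => F1 p.1 p.2]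
  simp only [tripleCount, and_comm]

lemma card_filter_eq_one_eq_sum_tripleCount :
    #{p : Fin n × Fin n | F1 p.1 p.2 = 1} =
      tripleCount n F1 F2 F3 1 0 0 + tripleCount n F1 F2 F3 1 0 1 +
        tripleCount n F1 F2 F3 1 1 0 + tripleCount n F1 F2 F3 1 1 1 := by
  rw [card_filter_eq_card_filter_and_zero_add _ _ fun p => F2 p.1 p.2, ← pairCount, ← pairCount,
    ← tripleCount_add_tripleCount_last F1 F2 F3, ← tripleCount_add_tripleCount_last F1 F2 F3,
    ← add_assoc]

end Superposition

theorem stmt_8_general (lam : ℕ)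
    (F1 F2 F3 : Fin (2 * lam) → Fin (2 * lam) → Fin 2)
    (h1 : IsFreqSquare (2 * lam) F1) :
    (OrthFS (2 * lam) F1 F2 ∧ OrthFS (2 * lam) F1 F3 ∧
      OrthFS (2 * lam) F2 F3) ↔
    (tripleCount (2 * lam) F1 F2 F3 0 0 0 = tripleCount (2 * lam) F1 F2 F3 0 1 1 ∧
     tripleCount (2 * lam) F1 F2 F3 0 1 1 = tripleCount (2 * lam) F1 F2 F3 1 0 1 ∧
     tripleCount (2 * lam) F1 F2 F3 1 0 1 = tripleCount (2 * lam) F1 F2 F3 1 1 0 ∧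
     tripleCount (2 * lam) F1 F2 F3 0 0 1 = tripleCount (2 * lam) F1 F2 F3 0 1 0 ∧
     tripleCount (2 * lam) F1 F2 F3 0 1 0 = tripleCount (2 * lam) F1 F2 F3 1 0 0 ∧
     tripleCount (2 * lam) F1 F2 F3 1 0 0 = tripleCount (2 * lam) F1 F2 F3 1 1 1) := by
  have hsq : (2 * lam) ^ 2 / 4 = lam * lam := by
    rw [show (2 * lam) ^ 2 = lam * lam * 4 by ring, Nat.mul_div_cancel _ four_pos]
  have hones := card_filter_eq_one_eq_sum_tripleCount F1 F2 F3
  rw [card_filter_prod_eq_mul _ h1.1, Fintype.card_fin, show 2 * lam / 2 = lam by omega,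
    mul_assoc] at hones
  simp only [orthFS_iff_pairCount, Fin.forall_fin_two, hsq,
    ← tripleCount_add_tripleCount_last F1 F2 F3, ← tripleCount_add_tripleCount_mid F1 F2 F3,
    ← tripleCount_add_tripleCount_first F1 F2 F3]
  omega

/-- Three binary frequency squares of order 2λ are pairwise orthogonal iff
x₀₀₀ = x₀₁₁ = x₁₀₁ = x₁₁₀ and x₀₀₁ = x₀₁₀ = x₁₀₀ = x₁₁₁. -/
theorem stmt_8 (lam : ℕ)
    (F1 F2 F3 : Fin (2 * lam) → Fin (2 * lam) → Fin 2)
    (h1 : IsFreqSquare (2 * lam) F1) (h2 : IsFreqSquare (2 * lam) F2)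
    (h3 : IsFreqSquare (2 * lam) F3) :
    (OrthFS (2 * lam) F1 F2 ∧ OrthFS (2 * lam) F1 F3 ∧
      OrthFS (2 * lam) F2 F3) ↔
    (tripleCount (2 * lam) F1 F2 F3 0 0 0 = tripleCount (2 * lam) F1 F2 F3 0 1 1 ∧
     tripleCount (2 * lam) F1 F2 F3 0 1 1 = tripleCount (2 * lam) F1 F2 F3 1 0 1 ∧
     tripleCount (2 * lam) F1 F2 F3 1 0 1 = tripleCount (2 * lam) F1 F2 F3 1 1 0 ∧
     tripleCount (2 * lam) F1 F2 F3 0 0 1 = tripleCount (2 * lam) F1 F2 F3 0 1 0 ∧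
     tripleCount (2 * lam) F1 F2 F3 0 1 0 = tripleCount (2 * lam) F1 F2 F3 1 0 0 ∧
     tripleCount (2 * lam) F1 F2 F3 1 0 0 = tripleCount (2 * lam) F1 F2 F3 1 1 1) :=
  stmt_8_general lam F1 F2 F3 h1
end

section
/- For odd positive integers t ≥ 1 and k > 1, there does not exist a resolvable 2-design with parameters (2k, k, t(k-1)). -/
/-!
Each parallel class of a resolvable `(2k, k, λ)`-design consists of two complementary blocks,
so of the three pairs formed by points `x, y, z` either all three or exactly one lie in a
common block of the class. Summing over the classes, `3λ` has the parity of the number of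
classes, which is the replication number `λ (2k - 1) / (k - 1) = t (2k - 1)`, odd;
but `λ = t (k - 1)` is even.
-/

open Finset

variable {α ι κ : Type*}

section Degrees

variable [DecidableEq α] [Fintype ι]

def degree (B : ι → Finset α) (x : α) : ℕ := #{i | x ∈ B i}

def pairDegree (B : ι → Finset α) (x y : α) : ℕ := #{i | x ∈ B i ∧ y ∈ B i}

theorem degree_mul_eq_of_pairDegree_eq [Fintype α] {B : ι → Finset α} {k l : ℕ}
    (hcard : ∀ i, #(B i) = k) (x : α) (hl : ∀ y ≠ x, pairDegree B x y = l) :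
    degree B x * (k - 1) = l * (Fintype.card α - 1) := by
  have hdouble := card_mul_eq_card_mul (fun y i => y ∈ B i) (s := univ.erase x)
    (t := {i | x ∈ B i}) (m := l) (n := k - 1)
    (fun y hy => by
      rw [bipartiteAbove, filter_filter]
      exact hl y (ne_of_mem_erase hy))
    (fun i hi => by
      have hx : x ∈ B i := (mem_filter.1 hi).2
      have : {y ∈ univ.erase x | y ∈ B i} = (B i).erase x := by
        ext y; simp [and_comm]
      rw [bipartiteBelow, this, card_erase_of_mem hx, hcard])
  rw [card_erase_of_mem (mem_univ x), card_univ] at hdouble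
  rw [degree, ← hdouble, mul_comm]

end Degrees

theorem odd_ite_eq_add_ite_eq_add_ite_eq {β : Type*} [DecidableEq β] {a b c : β}
    (h : a = b ∨ a = c ∨ b = c) :
    Odd ((if a = b then 1 else 0) + (if a = c then 1 else 0) + (if b = c then 1 else 0)) := by
  by_cases hab : a = b <;> by_cases hac : a = c <;> by_cases hbc : b = c <;> simp_all [Nat.odd_iff]

def IsResolution (B : ι → Finset α) (cls : ι → κ) : Prop :=
  ∀ j x, ∃! i, cls i = j ∧ x ∈ B i

namespace IsResolution

variable {B : ι → Finset α} {cls : ι → κ} (h : IsResolution B cls) {j : κ} {x y z : α}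

noncomputable def blockOf (j : κ) (x : α) : ι := (h j x).exists.choose

theorem cls_blockOf : cls (h.blockOf j x) = j := (h j x).exists.choose_spec.1

theorem mem_blockOf : x ∈ B (h.blockOf j x) := (h j x).exists.choose_spec.2

theorem blockOf_eq {i : ι} (hi : cls i = j) (hx : x ∈ B i) : h.blockOf j x = i :=
  (h j x).unique (h j x).exists.choose_spec ⟨hi, hx⟩

theorem blockOf_eq_blockOf_of_mem (hy : y ∈ B (h.blockOf j x)) :
    h.blockOf j y = h.blockOf j x :=
  h.blockOf_eq h.cls_blockOf hy

theorem disjoint_of_blockOf_ne (hxy : h.blockOf j x ≠ h.blockOf j y) :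
    Disjoint (B (h.blockOf j x)) (B (h.blockOf j y)) :=
  disjoint_left.2 fun _ hx hy =>
    hxy ((h.blockOf_eq_blockOf_of_mem hx).symm.trans (h.blockOf_eq_blockOf_of_mem hy))

theorem blockOf_eq_or_of_card_lt [DecidableEq α] [Fintype α] {k : ℕ} (hcard : ∀ i, #(B i) = k)
    (hv : Fintype.card α < 3 * k) (j : κ) (x y z : α) :
    h.blockOf j x = h.blockOf j y ∨ h.blockOf j x = h.blockOf j z ∨
      h.blockOf j y = h.blockOf j z := by
  by_contra! hne
  obtain ⟨hxy, hxz, hyz⟩ := hne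
  have hunion : #(B (h.blockOf j x) ∪ B (h.blockOf j y) ∪ B (h.blockOf j z)) = 3 * k := by
    rw [card_union_of_disjoint
        (disjoint_union_left.2 ⟨h.disjoint_of_blockOf_ne hxz, h.disjoint_of_blockOf_ne hyz⟩),
      card_union_of_disjoint (h.disjoint_of_blockOf_ne hxy), hcard, hcard, hcard]
    ring
  have := hunion ▸ card_le_univ (B (h.blockOf j x) ∪ B (h.blockOf j y) ∪ B (h.blockOf j z))
  omega

variable [DecidableEq α] [Fintype ι]

theorem degree_eq [Fintype κ] (h : IsResolution B cls) (x : α) :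
    degree B x = Fintype.card κ := by
  rw [← card_univ]
  refine card_bij (fun i _ => cls i) (fun _ _ => mem_univ _) (fun i₁ hi₁ i₂ hi₂ hcls => ?_)
    (fun j _ => ⟨h.blockOf j x, mem_filter.2 ⟨mem_univ _, h.mem_blockOf⟩, h.cls_blockOf⟩)
  rw [← h.blockOf_eq rfl (mem_filter.1 hi₁).2, ← h.blockOf_eq rfl (mem_filter.1 hi₂).2,
    hcls]

theorem card_filter_blockOf_eq_pairDegree [DecidableEq ι] [Fintype κ] (x y : α) :
    #{j | h.blockOf j x = h.blockOf j y} = pairDegree B x y := by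
  refine card_bij (fun j _ => h.blockOf j x) (fun j hj => ?_) (fun j₁ _ j₂ _ hj => ?_)
    (fun i hi => ?_)
  · rw [mem_filter] at hj ⊢
    exact ⟨mem_univ _, h.mem_blockOf, hj.2 ▸ h.mem_blockOf⟩
  · rw [← h.cls_blockOf (j := j₁) (x := x), hj, h.cls_blockOf]
  · obtain ⟨hx, hy⟩ := (mem_filter.1 hi).2
    refine ⟨cls i, mem_filter.2 ⟨mem_univ _, ?_⟩, h.blockOf_eq rfl hx⟩
    rw [h.blockOf_eq rfl hx, h.blockOf_eq rfl hy]

theorem even_card_iff_of_card_lt [DecidableEq ι] [Fintype α] [Fintype κ] {k : ℕ}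
    (h : IsResolution B cls) (hcard : ∀ i, #(B i) = k)
    (hv : Fintype.card α < 3 * k) (x y z : α) :
    Even (Fintype.card κ) ↔ Even (pairDegree B x y + pairDegree B x z + pairDegree B y z) := by
  simp only [← h.card_filter_blockOf_eq_pairDegree, card_filter]
  rw [← sum_add_distrib, ← sum_add_distrib, even_sum_iff_even_card_odd,
    filter_true_of_mem fun j _ =>
      odd_ite_eq_add_ite_eq_add_ite_eq (h.blockOf_eq_or_of_card_lt hcard hv j x y z),
    card_univ]

end IsResolution

/-- For odd positive integers t ≥ 1 and k > 1, there is no resolvable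
2-design with parameters (2k, k, t(k-1)): no family of k-subsets (blocks)
of a 2k-set, together with an assignment of blocks to parallel classes each
of which partitions the point set, such that every pair of distinct points
lies in exactly t(k-1) blocks. -/
theorem stmt_11 (t k : ℕ) (ht : Odd t) (hk : Odd k) (hk1 : 1 < k) :
    ¬ ∃ (m p : ℕ) (B : Fin m → Finset (Fin (2 * k))) (cls : Fin m → Fin p),
      (∀ i, (B i).card = k) ∧
      (∀ x y : Fin (2 * k), x ≠ y →
        (Finset.univ.filter fun i => x ∈ B i ∧ y ∈ B i).card = t * (k - 1)) ∧
      (∀ (j : Fin p) (x : Fin (2 * k)), ∃! i, cls i = j ∧ x ∈ B i) := by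
  rintro ⟨m, p, B, cls, hcard, hlam, hres⟩
  replace hres : IsResolution B cls := hres
  have hk3 : 3 ≤ k := by obtain ⟨a, rfl⟩ := hk; omega
  have hp : p = t * (2 * k - 1) := by
    have hrep := degree_mul_eq_of_pairDegree_eq hcard ⟨0, by omega⟩ fun y hy => hlam _ y hy.symm
    rw [hres.degree_eq, Fintype.card_fin, Fintype.card_fin] at hrep
    exact Nat.eq_of_mul_eq_mul_right (by omega) (hrep.trans (by ring))
  have hpar := hres.even_card_iff_of_card_lt hcard (by simp only [Fintype.card_fin]; omega)
    ⟨0, by omega⟩ ⟨1, by omega⟩ ⟨2, by omega⟩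
  rw [Fintype.card_fin, pairDegree, pairDegree, pairDegree, hlam _ _ (by simp),
    hlam _ _ (by simp), hlam _ _ (by simp), hp] at hpar
  have hl : Even (t * (k - 1)) := (Nat.Odd.sub_odd hk odd_one).mul_left t
  exact Nat.not_even_iff_odd.2 (ht.mul ⟨k - 1, by omega⟩) (hpar.2 ((hl.add hl).add hl))
end

section
/- If n ≡ 2 (mod 4) and n > 2, then there does not exist a complete set of (n-1)^2 mutually orthogonal binary frequency squares of type F(n; n/2). -/
/-!
Replace each square `F` by its `±1` matrix `Eᵢ = (-1)^(1 + F)`. Its line sums vanish, and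
orthogonal squares give orthogonal `Eᵢ`, so a complete set is an orthogonal basis, made of
vectors of norm `n`, of the `(n-1)^2`-dimensional space of integer matrices with zero line sums.
Parseval then identifies `∑ᵢ Eᵢ(a) Eᵢ(p)` with `n^2` times the orthogonal projection onto that
space; for two cells of one row it equals `1 - n`. But for three cells of one row, the three
pairwise products of `±1` values sum to `3` or `-1`, so summing over `i` gives
`1 - n ≡ (n-1)^2 (mod 4)`, which fails for `n ≡ 2 (mod 4)`.
-/

open Finset

section LineSums

variable {α β γ : Type*} [Fintype α] [Fintype β] [Fintype γ]

def HasZeroLineSums (v : α × β → ℤ) : Prop :=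
  (∀ a, ∑ b, v (a, b) = 0) ∧ ∀ b, ∑ a, v (a, b) = 0

variable [DecidableEq α] [DecidableEq β] [DecidableEq γ]

def centeredSingle (a x : γ) : ℤ := (if x = a then (Fintype.card γ : ℤ) else 0) - 1

lemma centeredSingle_dotProduct (a : γ) (f : γ → ℤ) :
    centeredSingle a ⬝ᵥ f = Fintype.card γ * f a - ∑ x, f x := by
  simp [dotProduct, centeredSingle, sub_mul, sum_sub_distrib, ite_mul]

lemma sum_centeredSingle (a : γ) : ∑ x, centeredSingle a x = 0 := by
  simp [centeredSingle, sum_sub_distrib]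

/-- `card α * card β` times the entry `(a, p)` of the orthogonal projection
`(I - J / card α) ⊗ (I - J / card β)` onto the matrices with zero line sums. -/
def lineProj (a p : α × β) : ℤ := centeredSingle a.1 p.1 * centeredSingle a.2 p.2

lemma lineProj_self (a : α × β) :
    lineProj a a = (Fintype.card α - 1) * (Fintype.card β - 1) := by
  simp [lineProj, centeredSingle]

lemma lineProj_hasZeroLineSums (a : α × β) : HasZeroLineSums (lineProj a) :=
  ⟨fun _ => by simp only [lineProj, ← mul_sum, sum_centeredSingle, mul_zero],
   fun _ => by simp only [lineProj, ← sum_mul, sum_centeredSingle, zero_mul]⟩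

lemma lineProj_dotProduct {v : α × β → ℤ} (hv : HasZeroLineSums v) (a : α × β) :
    lineProj a ⬝ᵥ v = Fintype.card α * Fintype.card β * v a := by
  have hrow : ∀ r, centeredSingle a.2 ⬝ᵥ (fun c => v (r, c)) = Fintype.card β * v (r, a.2) :=
    fun r => by rw [centeredSingle_dotProduct, hv.1 r, sub_zero]
  calc lineProj a ⬝ᵥ v
      = ∑ r, centeredSingle a.1 r * (centeredSingle a.2 ⬝ᵥ fun c => v (r, c)) := by
        simp only [dotProduct, Fintype.sum_prod_type, lineProj, mul_sum, mul_assoc]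
    _ = Fintype.card β * (centeredSingle a.1 ⬝ᵥ fun r => v (r, a.2)) := by
        simp only [hrow]
        simp only [dotProduct, mul_sum]
        exact sum_congr rfl fun _ _ => by ring
    _ = Fintype.card α * Fintype.card β * v a := by
        rw [centeredSingle_dotProduct, hv.2 a.2, sub_zero]; ring

theorem sum_mul_eq_lineProj {ι : Type*} [Fintype ι] (E : ι → α × β → ℤ)
    (hline : ∀ i, HasZeroLineSums (E i)) (hunit : ∀ i p, E i p * E i p = 1)
    (horth : Pairwise fun i j => E i ⬝ᵥ E j = 0)
    (hcard : (Fintype.card ι : ℤ) = (Fintype.card α - 1) * (Fintype.card β - 1))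
    (a p : α × β) :
    ∑ i, E i a * E i p = lineProj a p := by
  -- The `E i` are an orthogonal basis of the zero-line-sum space. Rather than counting
  -- dimensions, check that `D = lineProj a - S` has `D ⬝ᵥ D = N * (lineProj a a - card ι) = 0`.
  set N : ℤ := Fintype.card α * Fintype.card β
  set S := ∑ i, E i a • E i
  have hnorm : ∀ i, E i ⬝ᵥ E i = N := fun i => by
    simp [dotProduct, hunit, N]
  have hE_S : ∀ i, E i ⬝ᵥ S = N * E i a := fun i => by
    rw [dotProduct_sum, sum_eq_single i]
    · rw [dotProduct_smul, hnorm, smul_eq_mul, mul_comm]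
    · intro j _ hji; rw [dotProduct_smul, horth hji.symm, smul_zero]
    · simp
  have hE_D : ∀ i, E i ⬝ᵥ (lineProj a - S) = 0 := fun i => by
    rw [dotProduct_sub, hE_S, dotProduct_comm, lineProj_dotProduct (hline i), sub_self]
  have hS_D : S ⬝ᵥ (lineProj a - S) = 0 := by
    simp only [S, sum_dotProduct, smul_dotProduct, hE_D, smul_zero, sum_const_zero]
  have hQ_S : lineProj a ⬝ᵥ S = N * Fintype.card ι := by
    have h : ∀ i, E i a * (lineProj a ⬝ᵥ E i) = N := fun i => by
      rw [lineProj_dotProduct (hline i), ← mul_assoc, mul_comm _ N, mul_assoc, hunit, mul_one]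
    simp only [S, dotProduct_sum, dotProduct_smul, smul_eq_mul, h, sum_const, card_univ,
      nsmul_eq_mul, mul_comm]
  have hD_D : (lineProj a - S) ⬝ᵥ (lineProj a - S) = 0 := by
    rw [sub_dotProduct, hS_D, dotProduct_sub, hQ_S,
      lineProj_dotProduct (lineProj_hasZeroLineSums a), lineProj_self, hcard]
    ring
  have h := congrFun (dotProduct_self_eq_zero.mp hD_D) p
  simp only [S, Pi.sub_apply, Finset.sum_apply, Pi.smul_apply, smul_eq_mul, Pi.zero_apply,
    sub_eq_zero] at h
  exact h.symm

end LineSums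

def toSign (a : Fin 2) : ℤ := if a = 1 then 1 else -1

lemma toSign_mul_self (a : Fin 2) : toSign a * toSign a = 1 := by
  fin_cases a <;> rfl

lemma toSign_pairSum_modEq (a b c : Fin 2) :
    toSign a * toSign b + toSign b * toSign c + toSign a * toSign c ≡ 3 [ZMOD 4] := by
  fin_cases a <;> fin_cases b <;> fin_cases c <;> decide

lemma sum_toSign_eq_zero {γ : Type*} [Fintype γ] (f : γ → Fin 2)
    (hf : 2 * #{x | f x = 1} = Fintype.card γ) : ∑ x, toSign (f x) = 0 := by
  have hsplit := card_filter_add_card_filter_not (s := univ) (fun x => f x = 1)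
  rw [card_univ] at hsplit
  simp only [toSign, sum_ite, sum_const, nsmul_eq_mul, mul_one, mul_neg]
  omega

def signVec {α β : Type*} (F : α → β → Fin 2) (p : α × β) : ℤ := toSign (F p.1 p.2)

lemma signVec_hasZeroLineSums {n : ℕ} (hn : Even n) {F : Fin n → Fin n → Fin 2}
    (hF : IsFreqSquare n F) : HasZeroLineSums (signVec F) := by
  have h2 : 2 * (n / 2) = Fintype.card (Fin n) := by
    rw [Fintype.card_fin]; exact Nat.two_mul_div_two_of_even hn
  exact ⟨fun r => sum_toSign_eq_zero _ (by rw [hF.1 r, h2]),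
    fun c => sum_toSign_eq_zero _ (by rw [hF.2 c, h2])⟩

lemma signVec_dotProduct_eq_zero {n : ℕ} {F G : Fin n → Fin n → Fin 2} (h : OrthFS n F G) :
    signVec F ⬝ᵥ signVec G = 0 := by
  let g : Fin 2 × Fin 2 → ℤ := fun ab => toSign ab.1 * toSign ab.2
  have hcount : ∀ ab : Fin 2 × Fin 2,
      #{p : Fin n × Fin n | (F p.1 p.2, G p.1 p.2) = ab} = n ^ 2 / 4 := fun ab => by
    simpa only [Prod.ext_iff] using h ab.1 ab.2
  have hg : ∑ ab, g ab = 0 := by decide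
  calc signVec F ⬝ᵥ signVec G = ∑ p : Fin n × Fin n, g (F p.1 p.2, G p.1 p.2) := rfl
    _ = ∑ ab, #{p : Fin n × Fin n | (F p.1 p.2, G p.1 p.2) = ab} • g ab := by
      rw [← sum_fiberwise' univ _ g]; simp only [sum_const]
    _ = 0 := by simp only [hcount, ← smul_sum, hg, smul_zero]

lemma modEq_card_of_sum_toSign_mul_eq {ι κ : Type*} [Fintype ι] (f : ι → κ → Fin 2) {c : ℤ}
    (hc : ∀ x y, x ≠ y → ∑ i, toSign (f i x) * toSign (f i y) = c) {x y z : κ}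
    (hxy : x ≠ y) (hyz : y ≠ z) (hxz : x ≠ z) : c ≡ Fintype.card ι [ZMOD 4] := by
  have hsum : ∑ i, (toSign (f i x) * toSign (f i y) + toSign (f i y) * toSign (f i z)
      + toSign (f i x) * toSign (f i z)) = 3 * c := by
    rw [sum_add_distrib, sum_add_distrib, hc x y hxy, hc y z hyz, hc x z hxz]
    ring
  have h3 := Int.ModEq.sum (s := univ) fun i _ => toSign_pairSum_modEq (f i x) (f i y) (f i z)
  rw [hsum, sum_const, card_univ, nsmul_eq_mul] at h3
  rw [Int.modEq_iff_dvd] at h3 ⊢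
  omega

/-- If n ≡ 2 (mod 4) and n > 2, there is no complete set of (n-1)^2
mutually orthogonal binary frequency squares of type F(n; n/2). -/
theorem stmt_12 (n : ℕ) (hn : n % 4 = 2) (hn2 : 2 < n) :
    ¬ ∃ F : Fin ((n - 1) ^ 2) → Fin n → Fin n → Fin 2,
        IsMOFS n ((n - 1) ^ 2) F := by
  rintro ⟨F, hsq, horth⟩
  have hparseval := sum_mul_eq_lineProj (fun i => signVec (F i))
    (fun i => signVec_hasZeroLineSums (Nat.even_iff.mpr (by omega)) (hsq i))
    (fun _ _ => toSign_mul_self _) (fun i j hij => signVec_dotProduct_eq_zero (horth i j hij))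
    (by simp only [Fintype.card_fin]; push_cast [Nat.cast_sub (by omega : 1 ≤ n)]; ring)
  let r : Fin n := ⟨0, by omega⟩
  have hrow : ∀ x y : Fin n, x ≠ y → ∑ i, toSign (F i r x) * toSign (F i r y) = 1 - n :=
    fun x y hxy => (hparseval (r, x) (r, y)).trans <| by
      simp [lineProj, centeredSingle, Ne.symm hxy]
  have hmod := modEq_card_of_sum_toSign_mul_eq (fun i => F i r) hrow
    (x := ⟨0, by omega⟩) (y := ⟨1, by omega⟩) (z := ⟨2, by omega⟩)
    (by simp [Fin.ext_iff]) (by simp [Fin.ext_iff]) (by simp [Fin.ext_iff])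
  have hzmod := (ZMod.intCast_eq_intCast_iff _ _ 4).mpr hmod
  push_cast [Fintype.card_fin, Nat.cast_sub (by omega : 1 ≤ n)] at hzmod
  rw [← ZMod.natCast_mod, hn] at hzmod
  revert hzmod
  decide
end

section
/- Let {F_1,...,F_k} be a complete set of (n-1)^2 mutually orthogonal binary frequency squares of order n. For each square F_i and each symbol s ∈ {0,1}, let B_{s,i} be the set of columns containing s in the first row of F_i. Then the multiset of these 2(n-1)^2 blocks forms a resolvable (n, n/2, (n-1)(n-2)/2)-design on the column set. -/
/-!
Replacing the symbols 0, 1 by -1, 1 turns the squares into pairwise orthogonal ±1 vectors `H i`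
in the space `W` of real n × n matrices with vanishing row and column sums (the line sums vanish
because orthogonality forces n to be even). Since `dim W = (n - 1)²`, the `H i` form an orthogonal
basis of `W`. The projection of the matrix unit at `(r, x)` onto `W` is `dᵣ ⊗ dₓ` with
`dₜ = eₜ - 𝟙/n`, so Parseval's identity for these projections at `(r, x)` and `(r, y)` gives
`∑ i, H i (r, x) * H i (r, y) = n² (1 - 1/n) (-1/n) = -(n - 1)`. Hence row `r` of `F i` has
equal entries in columns `x ≠ y` for exactly `(n - 1)(n - 2)/2` indices `i`.
-/

open Finset Matrix Module

section OrthogonalFamily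

variable {K ι κ : Type*} [Field K] [Fintype ι] {b : κ → ι → K}

theorem sum_smul_dotProduct_of_pairwise (hb : Pairwise fun j k => b j ⬝ᵥ b k = 0)
    (c : κ → K) {s : Finset κ} {k : κ} (hk : k ∈ s) :
    (∑ j ∈ s, c j • b j) ⬝ᵥ b k = c k * (b k ⬝ᵥ b k) := by
  rw [sum_dotProduct, Finset.sum_eq_single_of_mem k hk fun j _ hjk => by
    rw [smul_dotProduct, hb hjk, smul_zero]]
  exact smul_dotProduct _ _ _

theorem linearIndependent_of_pairwise_dotProduct_eq_zero
    (hb : Pairwise fun j k => b j ⬝ᵥ b k = 0) (hb0 : ∀ k, b k ⬝ᵥ b k ≠ 0) :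
    LinearIndependent K b := by
  refine linearIndependent_iff'.mpr fun s c hc k hk => ?_
  have := sum_smul_dotProduct_of_pairwise hb c hk
  rw [hc, zero_dotProduct] at this
  exact (mul_eq_zero.mp this.symm).resolve_right (hb0 k)

theorem dotProduct_eq_sum_of_mem_span [Fintype κ] (hb : Pairwise fun j k => b j ⬝ᵥ b k = 0)
    (hb0 : ∀ k, b k ⬝ᵥ b k ≠ 0)
    {u : ι → K} (hu : u ∈ Submodule.span K (Set.range b)) (v : ι → K) :
    u ⬝ᵥ v = ∑ k, (u ⬝ᵥ b k) * (b k ⬝ᵥ v) / (b k ⬝ᵥ b k) := by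
  obtain ⟨c, rfl⟩ := (Submodule.mem_span_range_iff_exists_fun K).mp hu
  rw [sum_dotProduct]
  refine Finset.sum_congr rfl fun k _ => ?_
  rw [sum_smul_dotProduct_of_pairwise hb c (mem_univ k), smul_dotProduct, smul_eq_mul]
  field_simp [hb0 k]

theorem span_range_eq_of_pairwise_dotProduct_eq_zero [Fintype κ] {W : Submodule K (ι → K)}
    (hbW : ∀ k, b k ∈ W) (hb : Pairwise fun j k => b j ⬝ᵥ b k = 0)
    (hb0 : ∀ k, b k ⬝ᵥ b k ≠ 0) (hdim : finrank K W ≤ Fintype.card κ) :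
    Submodule.span K (Set.range b) = W := by
  refine Submodule.eq_of_le_of_finrank_le (Submodule.span_le.mpr ?_) ?_
  · rintro _ ⟨k, rfl⟩; exact hbW k
  · rwa [finrank_span_eq_card (linearIndependent_of_pairwise_dotProduct_eq_zero hb hb0)]

end OrthogonalFamily

section LineSums

variable (K : Type*) [Field K]

def lineSumsZero (α β : Type*) [Fintype α] [Fintype β] : Submodule K (α × β → K) where
  carrier := {M | (∀ a, ∑ b, M (a, b) = 0) ∧ ∀ b, ∑ a, M (a, b) = 0}
  add_mem' := by
    rintro M N ⟨hMr, hMc⟩ ⟨hNr, hNc⟩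
    simp_all [Finset.sum_add_distrib]
  zero_mem' := by simp
  smul_mem' := by
    rintro c M ⟨hr, hc⟩
    simp_all [← Finset.mul_sum]

variable {K}

theorem eq_zero_of_mem_lineSumsZero {m m' : ℕ} {M : Fin (m + 1) × Fin (m' + 1) → K}
    (hM : M ∈ lineSumsZero K (Fin (m + 1)) (Fin (m' + 1)))
    (h0 : ∀ (a : Fin m) (b : Fin m'), M (a.castSucc, b.castSucc) = 0) : M = 0 := by
  obtain ⟨hrow, hcol⟩ := hM
  have hlastCol : ∀ a : Fin m, M (a.castSucc, Fin.last m') = 0 := fun a => by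
    simpa [Fin.sum_univ_castSucc, h0] using hrow a.castSucc
  have hlastRow : ∀ b : Fin m', M (Fin.last m, b.castSucc) = 0 := fun b => by
    simpa [Fin.sum_univ_castSucc, h0] using hcol b.castSucc
  have hcorner : M (Fin.last m, Fin.last m') = 0 := by
    simpa [Fin.sum_univ_castSucc, hlastRow] using hrow (Fin.last m)
  ext ⟨a, b⟩
  induction a using Fin.lastCases <;> induction b using Fin.lastCases <;> simp [*]

theorem finrank_lineSumsZero_le (m m' : ℕ) :
    finrank K (lineSumsZero K (Fin (m + 1)) (Fin (m' + 1))) ≤ m * m' := by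
  let restrict := (LinearMap.funLeft K K (Prod.map Fin.castSucc Fin.castSucc)).domRestrict
    (lineSumsZero K (Fin (m + 1)) (Fin (m' + 1)))
  have hinj : Function.Injective restrict := by
    refine (injective_iff_map_eq_zero restrict).mpr fun M hM => Subtype.ext ?_
    exact eq_zero_of_mem_lineSumsZero M.2 fun a b => congrFun hM (a, b)
  simpa using LinearMap.finrank_le_finrank_of_injective hinj

end LineSums

section CenteredIndicator

variable {K α β : Type*} [Field K] [Fintype α] [Fintype β]

theorem tensor_dotProduct_tensor (u u' : α → K) (v v' : β → K) :
    (fun p : α × β => u p.1 * v p.2) ⬝ᵥ (fun p => u' p.1 * v' p.2) = (u ⬝ᵥ u') * (v ⬝ᵥ v') := by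
  simp only [dotProduct, Fintype.sum_prod_type, Finset.sum_mul_sum]
  exact Finset.sum_congr rfl fun a _ => Finset.sum_congr rfl fun b _ => by ring

variable [DecidableEq α] [DecidableEq β]

variable (K) in
def centeredIndicator (t : α) : α → K :=
  fun c => (if c = t then 1 else 0) - (Fintype.card α : K)⁻¹

theorem sum_centeredIndicator [CharZero K] (t : α) : ∑ c, centeredIndicator K t c = 0 := by
  have : (Fintype.card α : K) ≠ 0 := Nat.cast_ne_zero.mpr (Fintype.card_pos_iff.mpr ⟨t⟩).ne'
  simp [centeredIndicator, Finset.sum_sub_distrib, this]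

theorem centeredIndicator_dotProduct {f : α → K} (hf : ∑ c, f c = 0) (t : α) :
    centeredIndicator K t ⬝ᵥ f = f t := by
  simp [centeredIndicator, dotProduct, sub_mul, Finset.sum_sub_distrib, ← Finset.mul_sum, hf]

theorem centeredIndicator_dotProduct_centeredIndicator [CharZero K] (s t : α) :
    centeredIndicator K s ⬝ᵥ centeredIndicator K t = centeredIndicator K t s :=
  centeredIndicator_dotProduct (sum_centeredIndicator t) s

theorem tensor_centeredIndicator_mem_lineSumsZero [CharZero K] (s : α) (t : β) :
    (fun p : α × β => centeredIndicator K s p.1 * centeredIndicator K t p.2) ∈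
      lineSumsZero K α β :=
  ⟨fun a => by simp [← Finset.mul_sum, sum_centeredIndicator],
    fun b => by simp [← Finset.sum_mul, sum_centeredIndicator]⟩

theorem tensor_centeredIndicator_dotProduct {M : α × β → K} (hM : M ∈ lineSumsZero K α β)
    (s : α) (t : β) :
    (fun p : α × β => centeredIndicator K s p.1 * centeredIndicator K t p.2) ⬝ᵥ M = M (s, t) := by
  have hrow : ∀ a, ∑ b, centeredIndicator K s a * centeredIndicator K t b * M (a, b) =
      centeredIndicator K s a * M (a, t) := fun a => by
    simp_rw [mul_assoc, ← Finset.mul_sum]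
    rw [← centeredIndicator_dotProduct (hM.1 a) t, dotProduct]
  simp only [dotProduct, Fintype.sum_prod_type, hrow]
  exact centeredIndicator_dotProduct (hM.2 t) s

theorem sum_mul_div_dotProduct_self_eq [CharZero K] {κ : Type*} [Fintype κ]
    {H : κ → α × β → K} (hW : ∀ i, H i ∈ lineSumsZero K α β)
    (horth : Pairwise fun i j => H i ⬝ᵥ H j = 0) (hne : ∀ i, H i ⬝ᵥ H i ≠ 0)
    (hdim : finrank K (lineSumsZero K α β) ≤ Fintype.card κ) (p q : α × β) :
    ∑ i, H i p * H i q / (H i ⬝ᵥ H i) =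
      centeredIndicator K q.1 p.1 * centeredIndicator K q.2 p.2 := by
  have hspan := span_range_eq_of_pairwise_dotProduct_eq_zero hW horth hne hdim
  have hu := hspan ▸ tensor_centeredIndicator_mem_lineSumsZero (K := K) p.1 p.2
  have := dotProduct_eq_sum_of_mem_span horth hne hu
    (fun x => centeredIndicator K q.1 x.1 * centeredIndicator K q.2 x.2)
  simp_rw [tensor_dotProduct_tensor, centeredIndicator_dotProduct_centeredIndicator,
    dotProduct_comm (H _), tensor_centeredIndicator_dotProduct (hW _)] at this
  exact this.symm

end CenteredIndicator

def pmOne (a : Fin 2) : ℝ := if a = 1 then 1 else -1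

theorem pmOne_mul_pmOne (a b : Fin 2) : pmOne a * pmOne b = if a = b then 1 else -1 := by
  fin_cases a <;> fin_cases b <;> norm_num [pmOne]

theorem sum_ite_one_neg_one {ι : Type*} [Fintype ι] (P : ι → Prop) [DecidablePred P] :
    ∑ i, (if P i then (1 : ℝ) else -1) = 2 * #{i | P i} - Fintype.card ι := by
  have : ∀ i, (if P i then (1 : ℝ) else -1) = 2 * (if P i then 1 else 0) - 1 := fun i => by
    split_ifs <;> ring
  simp only [this, Finset.sum_sub_distrib, ← Finset.mul_sum, Finset.sum_boole]
  simp

theorem OrthFS.sum_eq {n : ℕ} {F G : Fin n → Fin n → Fin 2} (hFG : OrthFS n F G)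
    {M : Type*} [AddCommMonoid M] (φ : Fin 2 → Fin 2 → M) :
    ∑ p : Fin n × Fin n, φ (F p.1 p.2) (G p.1 p.2) = (n ^ 2 / 4) • ∑ a, ∑ b, φ a b := by
  rw [← Finset.sum_fiberwise univ (fun p => (F p.1 p.2, G p.1 p.2)), Fintype.sum_prod_type,
    Finset.smul_sum]
  refine Finset.sum_congr rfl fun a _ => ?_
  rw [Finset.smul_sum]
  refine Finset.sum_congr rfl fun b _ => ?_
  calc _ = ∑ p : Fin n × Fin n with (F p.1 p.2, G p.1 p.2) = (a, b), φ a b :=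
        Finset.sum_congr rfl fun p hp => by
          obtain ⟨ha, hb⟩ := Prod.mk.inj (Finset.mem_filter.mp hp).2
          rw [ha, hb]
    _ = _ := by rw [Finset.sum_const, ← hFG a b]; simp only [Prod.mk.injEq]

theorem OrthFS.even {n : ℕ} {F G : Fin n → Fin n → Fin 2} (hFG : OrthFS n F G) : Even n := by
  have := hFG.sum_eq fun _ _ => 1
  simp only [Finset.sum_const, card_univ, Fintype.card_prod, Fintype.card_fin, smul_eq_mul] at this
  have hsq : Even (n * n) := ⟨2 * (n ^ 2 / 4), by linarith⟩
  exact (Nat.even_mul.mp hsq).elim id id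

theorem IsMOFS.even {n k : ℕ} {F : Fin k → Fin n → Fin n → Fin 2} (h : IsMOFS n k F)
    (hk : 2 ≤ k) : Even n :=
  (h.2 ⟨0, by omega⟩ ⟨1, hk⟩ (by simp [Fin.ext_iff])).even

def pmVec {n : ℕ} (F : Fin n → Fin n → Fin 2) : Fin n × Fin n → ℝ :=
  fun p => pmOne (F p.1 p.2)

theorem sum_pmOne_of_card_eq {ι : Type*} [Fintype ι] {f : ι → Fin 2}
    (hf : #{i | f i = 1} = Fintype.card ι / 2) (hev : Even (Fintype.card ι)) :
    ∑ i, pmOne (f i) = 0 := by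
  obtain ⟨k, hk⟩ := hev
  rw [show ∑ i, pmOne (f i) = ∑ i, if f i = 1 then (1 : ℝ) else -1 from rfl,
    sum_ite_one_neg_one, hf, hk, ← two_mul, Nat.mul_div_cancel_left k two_pos]
  push_cast; ring

theorem IsFreqSquare.pmVec_mem_lineSumsZero {n : ℕ} {F : Fin n → Fin n → Fin 2}
    (hF : IsFreqSquare n F) (hev : Even n) : pmVec F ∈ lineSumsZero ℝ (Fin n) (Fin n) := by
  refine ⟨fun r => sum_pmOne_of_card_eq ?_ ?_, fun c => sum_pmOne_of_card_eq ?_ ?_⟩ <;>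
    simp [hF.1, hF.2, hev]

theorem OrthFS.pmVec_dotProduct_pmVec {n : ℕ} {F G : Fin n → Fin n → Fin 2}
    (hFG : OrthFS n F G) : pmVec F ⬝ᵥ pmVec G = 0 := by
  simp only [dotProduct, pmVec]
  rw [hFG.sum_eq fun a b => pmOne a * pmOne b]
  simp [Fin.sum_univ_two, pmOne]

theorem pmVec_dotProduct_self {n : ℕ} (F : Fin n → Fin n → Fin 2) :
    pmVec F ⬝ᵥ pmVec F = (n : ℝ) ^ 2 := by
  simp [dotProduct, pmVec, pmOne_mul_pmOne, sq]

theorem IsMOFS.even_of_complete {n : ℕ} {F : Fin ((n - 1) ^ 2) → Fin n → Fin n → Fin 2}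
    (h : IsMOFS n ((n - 1) ^ 2) F) (hn : 2 ≤ n) : Even n := by
  obtain rfl | hn3 := eq_or_lt_of_le hn
  · exact even_two
  · exact h.even (by nlinarith [Nat.sub_add_cancel (by omega : 1 ≤ n)])

theorem IsMOFS.two_mul_card_agree {n : ℕ} {F : Fin ((n - 1) ^ 2) → Fin n → Fin n → Fin 2}
    (h : IsMOFS n ((n - 1) ^ 2) F) {r x y : Fin n} (hxy : x ≠ y) :
    2 * #{i | F i r x = F i r y} = (n - 1) * (n - 2) := by
  have hn : 2 ≤ n := by have := Fin.val_ne_of_ne hxy; omega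
  obtain ⟨m, rfl⟩ : ∃ m, n = m + 1 := ⟨n - 1, by omega⟩
  have key := sum_mul_div_dotProduct_self_eq (K := ℝ) (H := fun i => pmVec (F i))
    (fun i => (h.1 i).pmVec_mem_lineSumsZero (h.even_of_complete hn))
    (fun i j hij => (h.2 i j hij).pmVec_dotProduct_pmVec)
    (fun i => by rw [pmVec_dotProduct_self]; positivity)
    (by simpa [sq] using finrank_lineSumsZero_le (K := ℝ) m m) (r, x) (r, y)
  simp only [pmVec_dotProduct_self, ← Finset.sum_div, pmVec, pmOne_mul_pmOne,
    sum_ite_one_neg_one, centeredIndicator] at key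
  simp only [Fintype.card_fin, if_true, if_neg hxy, Nat.add_sub_cancel] at key ⊢
  have hm : (m : ℝ) + 1 ≠ 0 := by positivity
  field_simp at key
  obtain ⟨k, rfl⟩ : ∃ k, m = k + 1 := ⟨m - 1, by omega⟩
  show 2 * _ = (k + 1) * k
  push_cast at key
  exact_mod_cast (by linear_combination key : (2 * #{i | F i r x = F i r y} : ℝ) = (k + 1) * k)

theorem filter_eq_one_eq_compl_filter_eq_zero {ι : Type*} [Fintype ι] [DecidableEq ι]
    (f : ι → Fin 2) :
    (univ.filter fun i => f i = 1) = (univ.filter fun i => f i = 0)ᶜ := by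
  ext i
  simp only [mem_filter, mem_univ, true_and, mem_compl]
  omega

theorem card_filter_eq_and_eq {ι β : Type*} [Fintype ι] [Fintype β] [DecidableEq β]
    (f g : ι → β) : #{b : ι × β | f b.1 = b.2 ∧ g b.1 = b.2} = #{i | f i = g i} := by
  refine Finset.card_nbij' Prod.fst (fun i => (i, f i)) ?_ ?_ ?_ fun i _ => rfl <;>
    intro _ _ <;> simp_all

/-- Given a complete set of (n-1)^2 MOFS of order n, the blocks
B_{s,i} = {c : F_i[first row, c] = s} (for s ∈ {0,1} and each square i)
form a resolvable (n, n/2, (n-1)(n-2)/2)-design on the columns: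
every block has size n/2, every pair of distinct columns lies in exactly
(n-1)(n-2)/2 blocks, and for each i the two blocks B_{0,i}, B_{1,i} form a
parallel class partitioning the column set. -/
theorem stmt_13 (n : ℕ) (hn : 0 < n)
    (F : Fin ((n - 1) ^ 2) → Fin n → Fin n → Fin 2)
    (h : IsMOFS n ((n - 1) ^ 2) F) :
    (∀ (i : Fin ((n - 1) ^ 2)) (s : Fin 2),
      (Finset.univ.filter fun c : Fin n => F i ⟨0, hn⟩ c = s).card = n / 2) ∧
    (∀ x y : Fin n, x ≠ y →
      (Finset.univ.filter fun b : Fin ((n - 1) ^ 2) × Fin 2 =>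
        F b.1 ⟨0, hn⟩ x = b.2 ∧ F b.1 ⟨0, hn⟩ y = b.2).card =
          (n - 1) * (n - 2) / 2) ∧
    (∀ i : Fin ((n - 1) ^ 2),
      (Finset.univ.filter fun c : Fin n => F i ⟨0, hn⟩ c = 1) =
        (Finset.univ.filter fun c : Fin n => F i ⟨0, hn⟩ c = 0)ᶜ) := by
  have hcompl := fun i => filter_eq_one_eq_compl_filter_eq_zero (F i ⟨0, hn⟩)
  obtain rfl | hn2 : n = 1 ∨ 2 ≤ n := by omega
  · exact ⟨fun i => i.elim0, fun x y hxy => absurd (Subsingleton.elim x y) hxy, hcompl⟩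
  refine ⟨fun i s => ?_, fun x y hxy => ?_, hcompl⟩
  · obtain rfl | rfl : s = 0 ∨ s = 1 := by omega
    · obtain ⟨k, hk⟩ := h.even_of_complete hn2
      rw [← compl_compl (filter _ _), ← hcompl, card_compl, (h.1 i).1, Fintype.card_fin]
      omega
    · exact (h.1 i).1 _
  · rw [card_filter_eq_and_eq (F · ⟨0, hn⟩ x) (F · ⟨0, hn⟩ y), ← h.two_mul_card_agree hxy,
      Nat.mul_div_cancel_left _ two_pos]
end

section
/- If λ is even, then every binary frequency square of type F(2λ; λ) has an orthogonal mate of the same type. -/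
/-! The ones of `B` and the zeros of `B` are each a `λ`-regular bipartite graph between rows and
columns. Peeling off perfect matchings (Hall's theorem), each contains a `λ/2`-regular subgraph.
Putting the ones of the mate exactly on these two subgraphs gives `λ` ones in every line, and each
of the four symbol pairs then occupies `2λ · λ/2 = λ²` cells. -/

open Finset

namespace FreqSquare

variable {α : Type*} [Fintype α]

def cells {β : Type*} [DecidableEq β] (F : α → α → β) (b : β) : Finset (α × α) :=
  {p | F p.1 p.2 = b}

theorem disjoint_cells {β : Type*} [DecidableEq β] (F : α → α → β) {a b : β} (hab : a ≠ b) :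
    Disjoint (cells F a) (cells F b) :=
  disjoint_filter.2 fun _ _ ha hb => hab (ha.symm.trans hb)

theorem mem_iff_of_subset_cells {β : Type*} [DecidableEq β] {F : α → α → β}
    {S : β → Finset (α × α)} (hS : ∀ b, S b ⊆ cells F b) {p : α × α} {b : β} :
    p ∈ S b ↔ F p.1 p.2 = b ∧ p ∈ S (F p.1 p.2) := by
  refine ⟨fun h => ?_, fun ⟨hb, h⟩ => hb ▸ h⟩
  have hb : F p.1 p.2 = b := (mem_filter.1 (hS b h)).2
  exact ⟨hb, hb ▸ h⟩

variable [DecidableEq α]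

def IsLineRegular (M : Finset (α × α)) (k : ℕ) : Prop :=
  (∀ r, #{c | (r, c) ∈ M} = k) ∧ ∀ c, #{r | (r, c) ∈ M} = k

namespace IsLineRegular

variable {M : Finset (α × α)} {k : ℕ}

theorem card_eq (hM : IsLineRegular M k) : #M = Fintype.card α * k := by
  calc #M = #{p | p ∈ M} := by rw [filter_mem_eq_inter, univ_inter]
    _ = ∑ r : α, ∑ c : α, if (r, c) ∈ M then 1 else 0 := by
        rw [card_filter, Fintype.sum_prod_type]
    _ = ∑ r : α, #{c | (r, c) ∈ M} := by simp only [card_filter]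
    _ = Fintype.card α * k := by simp [hM.1]

theorem exists_perm (hM : IsLineRegular M k) (hk : 0 < k) :
    ∃ σ : Equiv.Perm α, ∀ r, (r, σ r) ∈ M := by
  let nbrs : α → Finset α := fun r => {c | (r, c) ∈ M}
  -- Hall's condition: the `k * #s` cells in the rows of `s` fill columns of `s.biUnion nbrs`,
  -- each of which holds at most `k` of them.
  have hall : ∀ s : Finset α, #s ≤ #(s.biUnion nbrs) := by
    intro s
    refine Nat.le_of_mul_le_mul_right (card_mul_le_card_mul (fun r c => (r, c) ∈ M) ?_ ?_) hk
    · intro r hr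
      rw [← hM.1 r]
      refine card_le_card fun c hc => ?_
      simp only [mem_bipartiteAbove, mem_biUnion]
      exact ⟨⟨r, hr, hc⟩, (mem_filter.1 hc).2⟩
    · intro c _
      rw [← hM.2 c]
      exact card_le_card fun r hr => by simpa using (mem_filter.1 hr).2
  obtain ⟨f, hf, hfM⟩ := (all_card_le_biUnion_card_iff_exists_injective nbrs).1 hall
  exact ⟨Equiv.ofBijective f hf.bijective_of_finite, fun r => by simpa [nbrs] using hfM r⟩

theorem filter_apply_ne (hM : IsLineRegular M (k + 1)) (σ : Equiv.Perm α)
    (hσ : ∀ r, (r, σ r) ∈ M) : IsLineRegular {p ∈ M | σ p.1 ≠ p.2} k := by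
  refine ⟨fun r => ?_, fun c => ?_⟩
  · have hrow : ({c | (r, c) ∈ {p ∈ M | σ p.1 ≠ p.2}} : Finset α) =
        ({c | (r, c) ∈ M} : Finset α).erase (σ r) := by
      ext c; simp [eq_comm, and_comm]
    rw [hrow, card_erase_of_mem (by simpa using hσ r), hM.1 r, Nat.add_sub_cancel]
  · have hcol : ({r | (r, c) ∈ {p ∈ M | σ p.1 ≠ p.2}} : Finset α) =
        ({r | (r, c) ∈ M} : Finset α).erase (σ.symm c) := by
      ext r; simp [← Equiv.eq_symm_apply, and_comm]
    rw [hcol, card_erase_of_mem (by simpa using hσ (σ.symm c)), hM.2 c, Nat.add_sub_cancel]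

theorem exists_subset (hM : IsLineRegular M k) {m : ℕ} (hm : m ≤ k) :
    ∃ S ⊆ M, IsLineRegular S m := by
  induction k generalizing M with
  | zero => exact ⟨M, subset_rfl, Nat.le_zero.1 hm ▸ hM⟩
  | succ k ih =>
    obtain rfl | hm := hm.eq_or_lt
    · exact ⟨M, subset_rfl, hM⟩
    obtain ⟨σ, hσ⟩ := hM.exists_perm k.succ_pos
    obtain ⟨S, hS, hSreg⟩ := ih (hM.filter_apply_ne σ hσ) (Nat.lt_succ_iff.1 hm)
    exact ⟨S, hS.trans (filter_subset _ _), hSreg⟩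

theorem compl (hM : IsLineRegular M k) : IsLineRegular Mᶜ (Fintype.card α - k) := by
  refine ⟨fun r => ?_, fun c => ?_⟩
  · rw [← hM.1 r, ← card_univ,
      ← card_filter_add_card_filter_not (s := univ) (fun c => (r, c) ∈ M)]
    simp
  · rw [← hM.2 c, ← card_univ,
      ← card_filter_add_card_filter_not (s := univ) (fun r => (r, c) ∈ M)]
    simp

theorem union {S T : Finset (α × α)} {a b : ℕ} (hST : Disjoint S T) (hS : IsLineRegular S a)
    (hT : IsLineRegular T b) : IsLineRegular (S ∪ T) (a + b) := by
  refine ⟨fun r => ?_, fun c => ?_⟩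
  · rw [← hS.1 r, ← hT.1 r, ← card_union_of_disjoint]
    · simp only [mem_union, filter_or]
    · exact disjoint_filter.2 fun c _ hS hT => disjoint_left.1 hST hS hT
  · rw [← hS.2 c, ← hT.2 c, ← card_union_of_disjoint]
    · simp only [mem_union, filter_or]
    · exact disjoint_filter.2 fun r _ hS hT => disjoint_left.1 hST hS hT

end IsLineRegular

theorem cells_zero (F : α → α → Fin 2) : cells F 0 = (cells F 1)ᶜ := by
  ext p
  simp only [cells, mem_compl, mem_filter, mem_univ, true_and]
  generalize F p.1 p.2 = x
  fin_cases x <;> decide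

theorem isFreqSquare_iff {n : ℕ} {F : Fin n → Fin n → Fin 2} :
    IsFreqSquare n F ↔ IsLineRegular (cells F 1) (n / 2) := by
  simp [IsFreqSquare, IsLineRegular, cells]

def mate (F : α → α → Fin 2) (S : Fin 2 → Finset (α × α)) : α → α → Fin 2 :=
  fun r c => if (r, c) ∈ S (F r c) then 1 else 0

variable {F : α → α → Fin 2} {S : Fin 2 → Finset (α × α)}

theorem cells_mate_one (hS : ∀ a, S a ⊆ cells F a) : cells (mate F S) 1 = S 0 ∪ S 1 := by
  ext p
  rw [mem_union, mem_iff_of_subset_cells hS (b := 0), mem_iff_of_subset_cells hS (b := 1)]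
  simp only [cells, mate, Prod.mk.eta, Fin.isValue, ite_eq_left_iff, zero_ne_one, imp_false,
    Decidable.not_not, mem_filter, mem_univ, true_and]
  generalize F p.1 p.2 = x
  fin_cases x <;> simp

theorem filter_mate_eq_one (hS : ∀ a, S a ⊆ cells F a) (a : Fin 2) :
    ({p | F p.1 p.2 = a ∧ mate F S p.1 p.2 = 1} : Finset (α × α)) = S a := by
  ext p
  rw [mem_iff_of_subset_cells hS]
  simp [mate]

theorem filter_mate_eq_zero (hS : ∀ a, S a ⊆ cells F a) (a : Fin 2) :
    ({p | F p.1 p.2 = a ∧ mate F S p.1 p.2 = 0} : Finset (α × α)) = cells F a \ S a := by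
  ext p
  rw [mem_sdiff, mem_iff_of_subset_cells hS]
  simp only [cells, mate, mem_filter, mem_univ, true_and, ite_eq_right_iff, one_ne_zero]
  tauto

end FreqSquare

open FreqSquare in
/-- If λ is even, every binary frequency square of type F(2λ;λ) has an
orthogonal mate of the same type. -/
theorem stmt_15 (lam : ℕ) (hlam : Even lam)
    (B : Fin (2 * lam) → Fin (2 * lam) → Fin 2)
    (hB : IsFreqSquare (2 * lam) B) :
    ∃ B' : Fin (2 * lam) → Fin (2 * lam) → Fin 2,
      IsFreqSquare (2 * lam) B' ∧ OrthFS (2 * lam) B B' := by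
  obtain ⟨t, rfl⟩ := hlam
  have hhalf : 2 * (t + t) / 2 = t + t := by omega
  have hquarter : (2 * (t + t)) ^ 2 / 4 = 2 * (t + t) * t := by
    rw [show (2 * (t + t)) ^ 2 = 4 * (2 * (t + t) * t) by ring, Nat.mul_div_cancel_left _ four_pos]
  have hcells : ∀ a, IsLineRegular (cells B a) (t + t) := by
    have hones := isFreqSquare_iff.1 hB
    rw [hhalf] at hones
    refine Fin.forall_fin_two.2 ⟨?_, hones⟩
    simpa [cells_zero, two_mul] using hones.compl
  choose S hSsub hSreg using fun a => (hcells a).exists_subset (m := t) (by omega)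
  refine ⟨mate B S, ?_, fun a => Fin.forall_fin_two.2 ⟨?_, ?_⟩⟩
  · rw [isFreqSquare_iff, cells_mate_one hSsub, hhalf]
    exact (hSreg 0).union ((disjoint_cells B zero_ne_one).mono (hSsub 0) (hSsub 1)) (hSreg 1)
  · rw [filter_mate_eq_zero hSsub, card_sdiff_of_subset (hSsub a), (hcells a).card_eq,
      (hSreg a).card_eq, Fintype.card_fin, hquarter]
    exact Nat.sub_eq_of_eq_add (by ring)
  · rw [filter_mate_eq_one hSsub, (hSreg a).card_eq, Fintype.card_fin, hquarter]
end

section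
/- Let {F_1,...,F_k} be mutually orthogonal binary frequency squares of order n in which every square has the property that every pair of its rows is either equal or complementary, with n > 2. Then there exist at least (n/2)^4 basic trades (switching the entries on a 2×2 submatrix meeting all four constant blocks of F_1 in every square where those four cells have entries forming an identity pattern or its complement) each of which produces a set of MOFS not isomorphic to the original. -/
/-- Switching a basic trade: given a distinguished square F_{i0} and a set of
cells C, complement the entries on C in every square that agrees with F_{i0}
on all of C or disagrees with F_{i0} on all of C. -/
def switchOn (n k : ℕ) (F : Fin k → Fin n → Fin n → Fin 2) (i0 : Fin k)
    (C : Finset (Fin n × Fin n)) : Fin k → Fin n → Fin n → Fin 2 :=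
  fun i r c =>
    if ((∀ p ∈ C, F i p.1 p.2 = F i0 p.1 p.2) ∨
        (∀ p ∈ C, F i p.1 p.2 ≠ F i0 p.1 p.2)) ∧ (r, c) ∈ C
    then 1 - F i r c else F i r c

/-- Isomorphism of (ordered) sets of MOFS: common row and column
permutations, optional transposition of all squares, complementation of the
symbols in individual squares, and reordering of the squares. -/
def MOFSIso (n k : ℕ) (F G : Fin k → Fin n → Fin n → Fin 2) : Prop :=
  ∃ (σ τ : Equiv.Perm (Fin n)) (π : Equiv.Perm (Fin k)) (s : Fin k → Fin 2),
    (∀ i r c, G i r c = F (π i) (σ r) (τ c) + s i) ∨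
    (∀ i r c, G i r c = F (π i) (σ c) (τ r) + s i)

/-!
Since the rows of the first square `F₀` are pairwise equal or complementary,
`F₀ r c = f c + ε r`, and the frequency condition forces `f` and `ε` to take each value exactly
`n / 2` times. For rows `r₀, r₁` with `ε = 0, 1` and columns `c₀, c₁` with `f = 0, 1`, `F₀`
restricted to `{r₀, r₁} × {c₀, c₁}` is an intercalate (a 2 × 2 pattern `x y / y x` with
`x ≠ y`), and a square is switched exactly when its restriction there is an intercalate too.
Switching an intercalate is the same as exchanging its two rows, and also the same as exchanging
its two columns. A square that is not switched has rows `r₀, r₁` either equal, so it is fixed by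
the row exchange, or complementary and then each constant on `{c₀, c₁}`, so it is fixed by the
column exchange. Thus any two squares are transformed by a common permutation of the cells,
which preserves orthogonality, and each square both by a row-preserving and by a
column-preserving one, which preserves the frequency condition.

For non-isomorphism, having all rows pairwise equal or complementary is invariant under
isomorphism (it passes to columns, hence survives transposition). In the switched `F₀` it
fails: for `r₂ ∉ {r₀, r₁}` and `c₂ ∉ {c₀, c₁}`, switching changes the relation between rows
`r₀` and `r₂` at `c₀` but not at `c₂`.
-/

open Finset Function

section RowsEqOrCompl

variable {α β γ δ : Type*}

def RowsEqOrCompl (A : α → β → Fin 2) : Prop :=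
  ∀ r r', (∀ c, A r c = A r' c) ∨ (∀ c, A r c = 1 - A r' c)

theorem RowsEqOrCompl.transpose {A : α → β → Fin 2} (h : RowsEqOrCompl A) :
    RowsEqOrCompl fun c r => A r c := by
  intro c c'
  cases isEmpty_or_nonempty α with
  | inl _ => exact Or.inl isEmptyElim
  | inr hα =>
    obtain ⟨z⟩ := hα
    by_cases hz : A z c = A z c'
    · refine Or.inl fun r => ?_
      rcases h r z with h' | h' <;> simp only [h', hz]
    · refine Or.inr fun r => ?_
      rcases h r z with h' | h' <;> simp only [h'] <;> omega

theorem RowsEqOrCompl.reindex {A : α → β → Fin 2} (h : RowsEqOrCompl A) (σ : γ → α) (τ : δ → β)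
    (s : Fin 2) : RowsEqOrCompl fun r c => A (σ r) (τ c) + s := by
  intro r r'
  rcases h (σ r) (σ r') with h' | h'
  · exact Or.inl fun c => by simp only [h']
  · exact Or.inr fun c => by simp only [h']; omega

theorem RowsEqOrCompl.exists_eq_add {A : α → β → Fin 2} (h : RowsEqOrCompl A) :
    ∃ (f : β → Fin 2) (ε : α → Fin 2), ∀ r c, A r c = f c + ε r := by
  cases isEmpty_or_nonempty α with
  | inl _ => exact ⟨0, 0, isEmptyElim⟩
  | inr hα =>
    obtain ⟨z⟩ := hα
    cases isEmpty_or_nonempty β with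
    | inl _ => exact ⟨0, 0, fun _ => isEmptyElim⟩
    | inr hβ =>
      obtain ⟨w⟩ := hβ
      refine ⟨A z, fun r => A r w - A z w, fun r c => ?_⟩
      rcases h r z with h' | h' <;> simp only [h'] <;> omega

end RowsEqOrCompl

section SwapOn

variable {α β : Type*} [DecidableEq α] [DecidableEq β]

def flipOn (C : Finset (α × β)) (A : α → β → Fin 2) (r : α) (c : β) : Fin 2 :=
  if (r, c) ∈ C then 1 - A r c else A r c

def rowSwapOn (r₀ r₁ : α) (t : Finset β) : Equiv.Perm (α × β) :=
  Equiv.prodCongrLeft fun c => if c ∈ t then Equiv.swap r₀ r₁ else 1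

def colSwapOn (s : Finset α) (c₀ c₁ : β) : Equiv.Perm (α × β) :=
  Equiv.prodCongrRight fun r => if r ∈ s then Equiv.swap c₀ c₁ else 1

variable {A : α → β → Fin 2}

theorem flipOn_eq_comp_rowSwapOn {r₀ r₁ : α} {t : Finset β} (h : ∀ c ∈ t, A r₀ c ≠ A r₁ c) :
    uncurry (flipOn ({r₀, r₁} ×ˢ t) A) = uncurry A ∘ rowSwapOn r₀ r₁ t := by
  ext ⟨r, c⟩
  by_cases hc : c ∈ t
  · have e₀ : A r₀ c = 1 - A r₁ c := by have := h c hc; omega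
    have e₁ : A r₁ c = 1 - A r₀ c := by have := h c hc; omega
    rcases eq_or_ne r r₀ with rfl | h₀
    · simp [flipOn, rowSwapOn, hc, e₁]
    rcases eq_or_ne r r₁ with rfl | h₁
    · simp [flipOn, rowSwapOn, hc, e₀]
    simp [flipOn, rowSwapOn, hc, h₀, h₁, Equiv.swap_apply_of_ne_of_ne]
  · simp [flipOn, rowSwapOn, hc]

theorem flipOn_eq_comp_colSwapOn {s : Finset α} {c₀ c₁ : β} (h : ∀ r ∈ s, A r c₀ ≠ A r c₁) :
    uncurry (flipOn (s ×ˢ {c₀, c₁}) A) = uncurry A ∘ colSwapOn s c₀ c₁ := by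
  ext ⟨r, c⟩
  by_cases hr : r ∈ s
  · have e₀ : A r c₀ = 1 - A r c₁ := by have := h r hr; omega
    have e₁ : A r c₁ = 1 - A r c₀ := by have := h r hr; omega
    rcases eq_or_ne c c₀ with rfl | h₀
    · simp [flipOn, colSwapOn, hr, e₁]
    rcases eq_or_ne c c₁ with rfl | h₁
    · simp [flipOn, colSwapOn, hr, e₀]
    simp [flipOn, colSwapOn, hr, h₀, h₁, Equiv.swap_apply_of_ne_of_ne]
  · simp [flipOn, colSwapOn, hr]

theorem comp_rowSwapOn_eq {r₀ r₁ : α} {t : Finset β} (h : ∀ c ∈ t, A r₀ c = A r₁ c) :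
    uncurry A ∘ rowSwapOn r₀ r₁ t = uncurry A := by
  ext ⟨r, c⟩
  by_cases hc : c ∈ t
  · rcases eq_or_ne r r₀ with rfl | h₀
    · simp [rowSwapOn, hc, h c hc]
    rcases eq_or_ne r r₁ with rfl | h₁
    · simp [rowSwapOn, hc, h c hc]
    simp [rowSwapOn, hc, Equiv.swap_apply_of_ne_of_ne h₀ h₁]
  · simp [rowSwapOn, hc]

theorem comp_colSwapOn_eq {s : Finset α} {c₀ c₁ : β} (h : ∀ r ∈ s, A r c₀ = A r c₁) :
    uncurry A ∘ colSwapOn s c₀ c₁ = uncurry A := by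
  ext ⟨r, c⟩
  by_cases hr : r ∈ s
  · rcases eq_or_ne c c₀ with rfl | h₀
    · simp [colSwapOn, hr, h r hr]
    rcases eq_or_ne c c₁ with rfl | h₁
    · simp [colSwapOn, hr, h r hr]
    simp [colSwapOn, hr, Equiv.swap_apply_of_ne_of_ne h₀ h₁]
  · simp [colSwapOn, hr]

theorem not_rowsEqOrCompl_flipOn {C : Finset (α × β)} {r₀ r₂ : α} {c₀ c₂ : β}
    (hA : RowsEqOrCompl A)
    (h₀₀ : (r₀, c₀) ∈ C) (h₂₀ : (r₂, c₀) ∉ C) (h₀₂ : (r₀, c₂) ∉ C) (h₂₂ : (r₂, c₂) ∉ C) :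
    ¬RowsEqOrCompl (flipOn C A) := by
  intro hB
  have e₀₀ : flipOn C A r₀ c₀ = 1 - A r₀ c₀ := if_pos h₀₀
  have e₂₀ : flipOn C A r₂ c₀ = A r₂ c₀ := if_neg h₂₀
  have e₀₂ : flipOn C A r₀ c₂ = A r₀ c₂ := if_neg h₀₂
  have e₂₂ : flipOn C A r₂ c₂ = A r₂ c₂ := if_neg h₂₂
  rcases hA r₀ r₂ with h | h <;> rcases hB r₀ r₂ with h' | h' <;>
    · have := h c₀; have := h c₂; have := h' c₀; have := h' c₂; omega

end SwapOn

section Intercalate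

def IsIntercalate {α β : Type*} (A : α → β → Fin 2) (r₀ r₁ : α) (c₀ c₁ : β) : Prop :=
  A r₀ c₀ = A r₁ c₁ ∧ A r₀ c₁ = A r₁ c₀ ∧ A r₀ c₀ ≠ A r₀ c₁

def AgreesOrDisagreesOn {α β : Type*} (C : Finset (α × β)) (A A₀ : α → β → Fin 2) : Prop :=
  (∀ p ∈ C, A p.1 p.2 = A₀ p.1 p.2) ∨ (∀ p ∈ C, A p.1 p.2 ≠ A₀ p.1 p.2)

variable {α β : Type*} {A : α → β → Fin 2} {r₀ r₁ : α} {c₀ c₁ : β}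

theorem agreesOrDisagreesOn_iff_isIntercalate [DecidableEq α] [DecidableEq β]
    {A₀ : α → β → Fin 2} (h₀ : IsIntercalate A₀ r₀ r₁ c₀ c₁) :
    AgreesOrDisagreesOn ({r₀, r₁} ×ˢ {c₀, c₁}) A A₀ ↔ IsIntercalate A r₀ r₁ c₀ c₁ := by
  simp only [AgreesOrDisagreesOn, IsIntercalate, mem_product, mem_insert, mem_singleton, and_imp,
    or_imp, forall_and, Prod.forall, forall_eq_apply_imp_iff, forall_eq] at h₀ ⊢
  omega

theorem IsIntercalate.row_ne [DecidableEq α] (h : IsIntercalate A r₀ r₁ c₀ c₁) :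
    ∀ r ∈ ({r₀, r₁} : Finset α), A r c₀ ≠ A r c₁ := by
  simp only [IsIntercalate, mem_insert, mem_singleton, forall_eq_or_imp, forall_eq] at h ⊢
  omega

theorem IsIntercalate.col_ne [DecidableEq β] (h : IsIntercalate A r₀ r₁ c₀ c₁) :
    ∀ c ∈ ({c₀, c₁} : Finset β), A r₀ c ≠ A r₁ c := by
  simp only [IsIntercalate, mem_insert, mem_singleton, forall_eq_or_imp, forall_eq] at h ⊢
  omega

theorem rows_eq_or_cols_eq_of_not_isIntercalate [DecidableEq α] [DecidableEq β]
    (hrows : (∀ c, A r₀ c = A r₁ c) ∨ (∀ c, A r₀ c = 1 - A r₁ c))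
    (h : ¬IsIntercalate A r₀ r₁ c₀ c₁) :
    (∀ c ∈ ({c₀, c₁} : Finset β), A r₀ c = A r₁ c) ∨
      ∀ r ∈ ({r₀, r₁} : Finset α), A r c₀ = A r c₁ := by
  simp only [IsIntercalate, mem_insert, mem_singleton, forall_eq_or_imp, forall_eq] at h ⊢
  rcases hrows with h' | h'
  · exact Or.inl ⟨h' c₀, h' c₁⟩
  · have := h' c₀; have := h' c₁; omega

end Intercalate

section FreqSquare

variable {n : ℕ}

theorem OrthFS.of_comp {A B A' B' : Fin n → Fin n → Fin 2} (h : OrthFS n A B)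
    (e : Equiv.Perm (Fin n × Fin n)) (hA : uncurry A' = uncurry A ∘ e)
    (hB : uncurry B' = uncurry B ∘ e) : OrthFS n A' B' := by
  intro a b
  rw [← h a b]
  refine card_equiv e fun p => ?_
  simp only [mem_filter, mem_univ, true_and]
  rw [← uncurry_apply_pair A', ← uncurry_apply_pair B', hA, hB]
  rfl

theorem IsFreqSquare.of_comp {A B : Fin n → Fin n → Fin 2} (h : IsFreqSquare n A)
    {κ ρ : Fin n → Equiv.Perm (Fin n)}
    (hrow : uncurry B = uncurry A ∘ Equiv.prodCongrRight κ)
    (hcol : uncurry B = uncurry A ∘ Equiv.prodCongrLeft ρ) : IsFreqSquare n B := by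
  have hrow' (r c) : B r c = A r (κ r c) := congrFun hrow (r, c)
  have hcol' (r c) : B r c = A (ρ c r) c := congrFun hcol (r, c)
  refine ⟨fun r => ?_, fun c => ?_⟩
  · rw [← h.1 r]
    exact card_equiv (κ r) fun c => by simp only [mem_filter, mem_univ, true_and, hrow']
  · rw [← h.2 c]
    exact card_equiv (ρ c) fun r => by simp only [mem_filter, mem_univ, true_and, hcol']

end FreqSquare

section MOFS

variable {n k : ℕ} {F : Fin k → Fin n → Fin n → Fin 2} {i₀ : Fin k}

theorem switchOn_of_agreesOrDisagreesOn {C : Finset (Fin n × Fin n)} {i : Fin k}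
    (h : AgreesOrDisagreesOn C (F i) (F i₀)) : switchOn n k F i₀ C i = flipOn C (F i) := by
  funext r c
  exact if_congr (and_iff_right h) rfl rfl

theorem switchOn_of_not_agreesOrDisagreesOn {C : Finset (Fin n × Fin n)} {i : Fin k}
    (h : ¬AgreesOrDisagreesOn C (F i) (F i₀)) : switchOn n k F i₀ C i = F i := by
  funext r c
  exact if_neg fun h' => h h'.1

theorem switchOn_cases_of_isIntercalate {r₀ r₁ c₀ c₁ : Fin n} {i : Fin k}
    (hrows : (∀ c, F i r₀ c = F i r₁ c) ∨ (∀ c, F i r₀ c = 1 - F i r₁ c))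
    (hI : IsIntercalate (F i₀) r₀ r₁ c₀ c₁) :
    (uncurry (switchOn n k F i₀ ({r₀, r₁} ×ˢ {c₀, c₁}) i) =
          uncurry (F i) ∘ rowSwapOn r₀ r₁ {c₀, c₁} ∧
        uncurry (switchOn n k F i₀ ({r₀, r₁} ×ˢ {c₀, c₁}) i) =
          uncurry (F i) ∘ colSwapOn {r₀, r₁} c₀ c₁) ∨
      (switchOn n k F i₀ ({r₀, r₁} ×ˢ {c₀, c₁}) i = F i ∧
        (uncurry (F i) ∘ rowSwapOn r₀ r₁ {c₀, c₁} = uncurry (F i) ∨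
          uncurry (F i) ∘ colSwapOn {r₀, r₁} c₀ c₁ = uncurry (F i))) := by
  by_cases h : IsIntercalate (F i) r₀ r₁ c₀ c₁
  · rw [switchOn_of_agreesOrDisagreesOn ((agreesOrDisagreesOn_iff_isIntercalate hI).2 h)]
    exact Or.inl ⟨flipOn_eq_comp_rowSwapOn h.col_ne, flipOn_eq_comp_colSwapOn h.row_ne⟩
  · rw [switchOn_of_not_agreesOrDisagreesOn (mt (agreesOrDisagreesOn_iff_isIntercalate hI).1 h)]
    exact Or.inr ⟨rfl, (rows_eq_or_cols_eq_of_not_isIntercalate hrows h).imp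
      comp_rowSwapOn_eq comp_colSwapOn_eq⟩

theorem IsMOFS.switchOn_of_isIntercalate {r₀ r₁ c₀ c₁ : Fin n} (hF : IsMOFS n k F)
    (hrows : ∀ i, (∀ c, F i r₀ c = F i r₁ c) ∨ (∀ c, F i r₀ c = 1 - F i r₁ c))
    (hI : IsIntercalate (F i₀) r₀ r₁ c₀ c₁) :
    IsMOFS n k (switchOn n k F i₀ ({r₀, r₁} ×ˢ {c₀, c₁})) := by
  have key i := switchOn_cases_of_isIntercalate (hrows i) hI
  refine ⟨fun i => ?_, fun i j hij => ?_⟩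
  · rcases key i with ⟨hR, hK⟩ | ⟨hG, -⟩
    · exact (hF.1 i).of_comp hK hR
    · exact hG ▸ hF.1 i
  · have hFij := hF.2 i j hij
    rcases key i with ⟨hRi, hKi⟩ | ⟨hGi, hi⟩ <;> rcases key j with ⟨hRj, hKj⟩ | ⟨hGj, hj⟩
    · exact hFij.of_comp _ hRi hRj
    · rw [hGj]
      rcases hj with hj | hj
      · exact hFij.of_comp _ hRi hj.symm
      · exact hFij.of_comp _ hKi hj.symm
    · rw [hGi]
      rcases hi with hi | hi
      · exact hFij.of_comp _ hi.symm hRj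
      · exact hFij.of_comp _ hi.symm hKj
    · rwa [hGi, hGj]

theorem MOFSIso.rowsEqOrCompl {G : Fin k → Fin n → Fin n → Fin 2} (h : MOFSIso n k F G)
    (hF : ∀ i, RowsEqOrCompl (F i)) (i : Fin k) : RowsEqOrCompl (G i) := by
  obtain ⟨σ, τ, π, s, hG | hG⟩ := h
  · rw [show G i = _ from funext₂ (hG i)]
    exact (hF (π i)).reindex σ τ (s i)
  · rw [show G i = _ from funext₂ (hG i)]
    exact (hF (π i)).transpose.reindex τ σ (s i)

theorem not_mofsIso_switchOn {C : Finset (Fin n × Fin n)} {r₀ r₂ c₀ c₂ : Fin n}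
    (hF : ∀ i, RowsEqOrCompl (F i))
    (h₀₀ : (r₀, c₀) ∈ C) (h₂₀ : (r₂, c₀) ∉ C) (h₀₂ : (r₀, c₂) ∉ C) (h₂₂ : (r₂, c₂) ∉ C) :
    ¬MOFSIso n k F (switchOn n k F i₀ C) := by
  intro h
  have hG := h.rowsEqOrCompl hF i₀
  rw [switchOn_of_agreesOrDisagreesOn (Or.inl fun _ _ => rfl)] at hG
  exact not_rowsEqOrCompl_flipOn (hF i₀) h₀₀ h₂₀ h₀₂ h₂₂ hG

end MOFS

theorem IsFreqSquare.card_filter_eq_half {n : ℕ} {A : Fin n → Fin n → Fin 2}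
    (h : IsFreqSquare n A) (hn : 2 ≤ n) {f ε : Fin n → Fin 2} (hA : ∀ r c, A r c = f c + ε r)
    (b : Fin 2) : #{c | f c = b} = n / 2 ∧ #{r | ε r = b} = n / 2 := by
  have hrow r : #{c | f c = 1 - ε r} = n / 2 := by
    rw [← h.1 r]
    congr 1
    exact filter_congr fun c _ => by rw [hA]; omega
  have hcol c : #{r | ε r = 1 - f c} = n / 2 := by
    rw [← h.2 c]
    congr 1
    exact filter_congr fun r _ => by rw [hA]; omega
  have hsplit (g : Fin n → Fin 2) b : #{x | g x = b} + #{x | g x = 1 - b} = n := by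
    have := card_filter_add_card_filter_not (s := univ) (g · = b)
    rw [card_univ, Fintype.card_fin] at this
    rwa [filter_congr fun x _ => (by omega : g x = 1 - b ↔ ¬g x = b)]
  have hits (g : Fin n → Fin 2) b (hb : 0 < #{x | g x = b}) : ∃ x, g x = b := by
    simpa [Finset.Nonempty] using hb
  have hε b : #{r | ε r = b} = n / 2 := by
    have r₀ : Fin n := ⟨0, by omega⟩
    obtain ⟨c, hc⟩ : ∃ c, f c = 1 - b := by
      have := hrow r₀
      have := hsplit f (1 - ε r₀)
      rcases (by omega : 1 - b = 1 - ε r₀ ∨ 1 - b = 1 - (1 - ε r₀)) with hb | hb <;>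
        rw [hb] <;> exact hits f _ (by omega)
    rw [← hcol c, hc, sub_sub_cancel]
  refine ⟨?_, hε b⟩
  obtain ⟨r, hr⟩ := hits ε (1 - b) (by rw [hε]; omega)
  rw [← hrow r, hr, sub_sub_cancel]

theorem injOn_pair_product_pair {α β : Type*} [DecidableEq α] [DecidableEq β]
    {s₀ s₁ : Finset α} {t₀ t₁ : Finset β} (hs : Disjoint s₀ s₁) (ht : Disjoint t₀ t₁) :
    Set.InjOn (fun x : α × α × β × β => ({x.1, x.2.1} ×ˢ {x.2.2.1, x.2.2.2} : Finset (α × β)))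
      ↑(s₀ ×ˢ s₁ ×ˢ t₀ ×ˢ t₁) := by
  rintro ⟨a₀, a₁, b₀, b₁⟩ hx ⟨a₀', a₁', b₀', b₁'⟩ hx' heq
  simp only [coe_product, Set.mem_prod, mem_coe] at hx hx' heq
  have h₀₁ : (a₀, b₁) ∈ ({a₀', a₁'} ×ˢ {b₀', b₁'} : Finset (α × β)) := heq ▸ by simp
  have h₁₀ : (a₁, b₀) ∈ ({a₀', a₁'} ×ˢ {b₀', b₁'} : Finset (α × β)) := heq ▸ by simp
  simp only [mem_product, mem_insert, mem_singleton] at h₀₁ h₁₀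
  have hs' := disjoint_left.1 hs
  have ht' := disjoint_left.1 ht
  obtain ⟨rfl | rfl, rfl | rfl⟩ := h₀₁ <;> obtain ⟨rfl | rfl, rfl | rfl⟩ := h₁₀ <;>
    first | rfl | simp_all

/-- Let {F_1,…,F_k} be MOFS of order n > 2 in which, in every square, every
pair of rows is equal or complementary. Then there are at least (n/2)^4 basic
trades (sets of cells C), each of which, when switched, produces a set of
MOFS not isomorphic to the original one. -/
theorem stmt_16 (n k : ℕ) (hn : 2 < n) (hk : 0 < k)
    (F : Fin k → Fin n → Fin n → Fin 2)
    (hmofs : IsMOFS n k F)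
    (hrows : ∀ (i : Fin k) (r r' : Fin n),
      (∀ c, F i r c = F i r' c) ∨ (∀ c, F i r c = 1 - F i r' c)) :
    ∃ T : Finset (Finset (Fin n × Fin n)),
      (n / 2) ^ 4 ≤ T.card ∧
      ∀ C ∈ T,
        IsMOFS n k (switchOn n k F ⟨0, hk⟩ C) ∧
        ¬ MOFSIso n k F (switchOn n k F ⟨0, hk⟩ C) := by
  obtain ⟨f, ε, hF₀⟩ := RowsEqOrCompl.exists_eq_add (A := F ⟨0, hk⟩) (hrows _)
  have hcard := (hmofs.1 ⟨0, hk⟩).card_filter_eq_half hn.le hF₀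
  have hdisj (g : Fin n → Fin 2) : Disjoint (α := Finset (Fin n)) {x | g x = 0} {x | g x = 1} :=
    disjoint_filter.2 fun x _ h₀ h₁ => by simp [h₀] at h₁
  refine ⟨(univ.filter (ε · = 0) ×ˢ univ.filter (ε · = 1) ×ˢ univ.filter (f · = 0) ×ˢ
    univ.filter (f · = 1)).image fun x => {x.1, x.2.1} ×ˢ {x.2.2.1, x.2.2.2}, ?_, ?_⟩
  · rw [card_image_of_injOn (injOn_pair_product_pair (hdisj ε) (hdisj f))]
    simp only [card_product, (hcard 0).1, (hcard 0).2, (hcard 1).1, (hcard 1).2]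
    exact le_of_eq (by ring)
  simp only [mem_image, mem_product, mem_filter, mem_univ, true_and]
  rintro _ ⟨⟨r₀, r₁, c₀, c₁⟩, ⟨hr₀, hr₁, hc₀, hc₁⟩, rfl⟩
  dsimp only at hr₀ hr₁ hc₀ hc₁ ⊢
  have hI : IsIntercalate (F ⟨0, hk⟩) r₀ r₁ c₀ c₁ := by
    simp only [IsIntercalate, hF₀, hr₀, hr₁, hc₀, hc₁]
    decide
  obtain ⟨r₂, hr₂₀, hr₂₁⟩ := Fin.exists_ne_and_ne_of_two_lt r₀ r₁ hn
  obtain ⟨c₂, hc₂₀, hc₂₁⟩ := Fin.exists_ne_and_ne_of_two_lt c₀ c₁ hn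
  refine ⟨hmofs.switchOn_of_isIntercalate (fun i => hrows i r₀ r₁) hI,
    not_mofsIso_switchOn (r₀ := r₀) (r₂ := r₂) (c₀ := c₀) (c₂ := c₂) hrows ?_ ?_ ?_ ?_⟩ <;>
    simp [*]
end

section
/- Let F = {F_1,...,F_k} be a set of mutually orthogonal binary frequency squares of order n, let C be a nonempty set of cells, and for each i set C_i = C if F_i agrees with F_1 on every cell of C or disagrees with F_1 on every cell of C, else C_i = ∅. Then complementing the entries of F_i on C_i for every i yields another set of mutually orthogonal frequency squares if and only if (1) every row and column of F_1 contains equally many zeros and ones among the cells of C, and (2) for every j with C_j = ∅, the number of cells of C where F_1 = 1 and F_j = 1 equals the number where F_1 = 0 and F_j = 1. -/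
open Finset

section Balanced
variable {α : Type*} {S : Finset α} {f : α → Fin 2}

def IsBalancedOn (S : Finset α) (f : α → Fin 2) : Prop :=
  #(S.filter (f · = 0)) = #(S.filter (f · = 1))

theorem isBalancedOn_filter_iff {ρ : α → Prop} [DecidablePred ρ] :
    IsBalancedOn (S.filter ρ) f ↔
      #(S.filter fun x => ρ x ∧ f x = 0) = #(S.filter fun x => ρ x ∧ f x = 1) := by
  rw [IsBalancedOn, filter_filter, filter_filter]

theorem IsBalancedOn.card_filter_comp_eq (hf : IsBalancedOn S f) (φ : Fin 2 → Prop)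
    [DecidablePred φ] {q q' : α → Prop} [DecidablePred q] [DecidablePred q']
    (hq : ∀ x ∈ S, q x ↔ φ (f x)) (hq' : ∀ x ∈ S, q' x ↔ φ (f x + 1)) :
    #(S.filter q) = #(S.filter q') := by
  rw [filter_congr hq, filter_congr hq']
  have hφ : ∀ v : Fin 2, φ v ↔ (v = 0 ∧ φ 0) ∨ (v = 1 ∧ φ 1) := by
    intro v; fin_cases v <;> simp
  have hφ' : ∀ v : Fin 2, φ (v + 1) ↔ (v = 1 ∧ φ 0) ∨ (v = 0 ∧ φ 1) := by
    intro v; fin_cases v <;> simp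
  simp only [hφ (f _), hφ' (f _)]
  unfold IsBalancedOn at hf
  by_cases h0 : φ 0 <;> by_cases h1 : φ 1 <;> simp [h0, h1, hf, or_comm]

theorem IsBalancedOn.of_eq_add {g : α → Fin 2} (hf : IsBalancedOn S f) (e : Fin 2)
    (h : ∀ x ∈ S, g x = f x + e) : IsBalancedOn S g :=
  hf.card_filter_comp_eq (· + e = 0) (fun x hx => by rw [h x hx])
    (fun x hx => by
      rw [h x hx]
      exact (by decide : ∀ v e : Fin 2, v + e = 1 ↔ v + 1 + e = 0) _ _)

theorem IsBalancedOn.filter_eq_zero_of_filter_eq_one {g : α → Fin 2} (hf : IsBalancedOn S f)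
    (h1 : IsBalancedOn (S.filter (g · = 1)) f) : IsBalancedOn (S.filter (g · = 0)) f := by
  have hne : ∀ a : Fin 2, ¬ a = 0 ↔ a = 1 := by decide
  have hsplit : ∀ v : Fin 2, #((S.filter (g · = 0)).filter (f · = v)) +
      #((S.filter (g · = 1)).filter (f · = v)) = #(S.filter (f · = v)) := by
    intro v
    rw [← card_filter_add_card_filter_not (s := S.filter (f · = v)) (g · = 0)]
    simp only [filter_filter, and_comm, hne]
  unfold IsBalancedOn at *
  have := hsplit 0
  have := hsplit 1
  omega

theorem IsBalancedOn.of_fibers {β : Type*} [Fintype β] [DecidableEq β] (g : α → β)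
    (h : ∀ y, IsBalancedOn (S.filter (g · = y)) f) : IsBalancedOn S f := by
  unfold IsBalancedOn at *
  rw [card_eq_sum_card_fiberwise (f := g) (t := univ) (fun _ _ => mem_univ _),
    card_eq_sum_card_fiberwise (f := g) (t := univ) (fun _ _ => mem_univ _)]
  exact sum_congr rfl fun y _ => by rw [filter_comm, h y, filter_comm]

end Balanced

theorem card_filter_univ_eq_iff_of_forall_notMem {α : Type*} [Fintype α] [DecidableEq α]
    {C : Finset α} {q q' : α → Prop} [DecidablePred q] [DecidablePred q']
    (h : ∀ x ∉ C, q x ↔ q' x) :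
    #(univ.filter q) = #(univ.filter q') ↔ #(C.filter q) = #(C.filter q') := by
  have hsplit : ∀ (r : α → Prop) [DecidablePred r],
      #(C.filter r) + #(univ.filter fun x => x ∉ C ∧ r x) = #(univ.filter r) := by
    intro r _
    rw [← card_filter_add_card_filter_not (s := univ.filter r) (· ∈ C), filter_filter,
      filter_filter]
    congr 2 <;> ext x <;> simp [and_comm]
  rw [← hsplit q, ← hsplit q', filter_congr fun x _ => and_congr_right (h x)]
  omega

theorem card_filter_univ_fst_eq {β γ : Type*} [Fintype β] [Fintype γ] [DecidableEq β] (b : β)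
    (q : β × γ → Prop) [DecidablePred q] :
    #(univ.filter fun c => q (b, c)) = #(univ.filter fun p : β × γ => p.1 = b ∧ q p) := by
  refine card_nbij' (Prod.mk b) Prod.snd ?_ ?_ ?_ ?_ <;> intro x <;> grind

theorem card_filter_univ_snd_eq {β γ : Type*} [Fintype β] [Fintype γ] [DecidableEq γ] (c : γ)
    (q : β × γ → Prop) [DecidablePred q] :
    #(univ.filter fun b => q (b, c)) = #(univ.filter fun p : β × γ => p.2 = c ∧ q p) := by
  refine card_nbij' (Prod.mk · c) Prod.fst ?_ ?_ ?_ ?_ <;> intro x <;> grind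

section Squares
variable {n : ℕ}

def complementOn (C : Finset (Fin n × Fin n)) (X : Fin n → Fin n → Fin 2) :
    Fin n → Fin n → Fin 2 :=
  fun r c => if (r, c) ∈ C then 1 - X r c else X r c

variable {C : Finset (Fin n × Fin n)} {X Y : Fin n → Fin n → Fin 2}

theorem complementOn_of_notMem {r c : Fin n} (h : (r, c) ∉ C) :
    complementOn C X r c = X r c :=
  if_neg h

theorem complementOn_of_mem {r c : Fin n} (h : (r, c) ∈ C) :
    complementOn C X r c = X r c + 1 := by
  rw [complementOn, if_pos h]
  exact (by decide : ∀ x : Fin 2, 1 - x = x + 1) _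

theorem card_row_complementOn_eq_iff (r : Fin n) :
    #(univ.filter fun c => complementOn C X r c = 1) = #(univ.filter fun c => X r c = 1) ↔
      IsBalancedOn (C.filter (·.1 = r)) fun p => X p.1 p.2 := by
  have hC : ∀ p ∈ C, p.1 = r ∧ complementOn C X p.1 p.2 = 1 ↔ p.1 = r ∧ X p.1 p.2 = 0 :=
    fun p hp => by rw [complementOn_of_mem hp, add_eq_right]
  rw [card_filter_univ_fst_eq r fun p => complementOn C X p.1 p.2 = 1,
    card_filter_univ_fst_eq r fun p => X p.1 p.2 = 1,
    card_filter_univ_eq_iff_of_forall_notMem fun p hp => by rw [complementOn_of_notMem hp],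
    filter_congr hC, isBalancedOn_filter_iff]

theorem card_col_complementOn_eq_iff (c : Fin n) :
    #(univ.filter fun r => complementOn C X r c = 1) = #(univ.filter fun r => X r c = 1) ↔
      IsBalancedOn (C.filter (·.2 = c)) fun p => X p.1 p.2 := by
  have hC : ∀ p ∈ C, p.2 = c ∧ complementOn C X p.1 p.2 = 1 ↔ p.2 = c ∧ X p.1 p.2 = 0 :=
    fun p hp => by rw [complementOn_of_mem hp, add_eq_right]
  rw [card_filter_univ_snd_eq c fun p => complementOn C X p.1 p.2 = 1,
    card_filter_univ_snd_eq c fun p => X p.1 p.2 = 1,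
    card_filter_univ_eq_iff_of_forall_notMem fun p hp => by rw [complementOn_of_notMem hp],
    filter_congr hC, isBalancedOn_filter_iff]

theorem isFreqSquare_complementOn_iff (hX : IsFreqSquare n X) :
    IsFreqSquare n (complementOn C X) ↔
      (∀ r, IsBalancedOn (C.filter (·.1 = r)) fun p => X p.1 p.2) ∧
        ∀ c, IsBalancedOn (C.filter (·.2 = c)) fun p => X p.1 p.2 := by
  refine and_congr (forall_congr' fun r => ?_) (forall_congr' fun c => ?_)
  · rw [← hX.1 r, card_row_complementOn_eq_iff]
  · rw [← hX.2 c, card_col_complementOn_eq_iff]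

theorem OrthFS.symm (h : OrthFS n X Y) : OrthFS n Y X := fun a b => by
  rw [← h b a]
  simp only [and_comm]

theorem orthFS_iff_of_forall_notMem {X' Y' : Fin n → Fin n → Fin 2}
    (hX : ∀ p ∉ C, X' p.1 p.2 = X p.1 p.2) (hY : ∀ p ∉ C, Y' p.1 p.2 = Y p.1 p.2)
    (h : OrthFS n X Y) :
    OrthFS n X' Y' ↔ ∀ a b, #(C.filter fun p => X' p.1 p.2 = a ∧ Y' p.1 p.2 = b) =
      #(C.filter fun p => X p.1 p.2 = a ∧ Y p.1 p.2 = b) := by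
  refine forall₂_congr fun a b => ?_
  rw [← h a b]
  exact card_filter_univ_eq_iff_of_forall_notMem fun p hp => by rw [hX p hp, hY p hp]

theorem orthFS_complementOn_left_iff (h : OrthFS n X Y) :
    OrthFS n (complementOn C X) Y ↔
      ∀ b, IsBalancedOn (C.filter fun p => Y p.1 p.2 = b) fun p => X p.1 p.2 := by
  rw [orthFS_iff_of_forall_notMem (fun p hp => complementOn_of_notMem hp) (fun _ _ => rfl) h,
    forall_comm]
  refine forall_congr' fun b => ?_
  have hC : ∀ a, ∀ p ∈ C, complementOn C X p.1 p.2 = a ∧ Y p.1 p.2 = b ↔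
      X p.1 p.2 = a + 1 ∧ Y p.1 p.2 = b :=
    fun a p hp => by
      rw [complementOn_of_mem hp, (by decide : ∀ x a : Fin 2, x + 1 = a ↔ x = a + 1)]
  simp only [fun a => filter_congr (hC a)]
  simp only [Fin.forall_fin_two, isBalancedOn_filter_iff, zero_add, Fin.reduceAdd,
    and_comm (b := Y _ _ = b)]
  exact ⟨fun h => h.1.symm, fun h => ⟨h.symm, h⟩⟩

theorem OrthFS.complementOn (h : OrthFS n X Y) (hY : IsBalancedOn C fun p => Y p.1 p.2)
    (e : Fin 2) (hXY : ∀ p ∈ C, X p.1 p.2 = Y p.1 p.2 + e) :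
    OrthFS n (complementOn C X) (complementOn C Y) := by
  rw [orthFS_iff_of_forall_notMem (fun p hp => complementOn_of_notMem hp)
    (fun p hp => complementOn_of_notMem hp) h]
  intro a b
  refine (hY.card_filter_comp_eq (fun v => v + e = a ∧ v = b) (fun p hp => ?_)
    (fun p hp => ?_)).symm
  · rw [hXY p hp]
  · rw [complementOn_of_mem hp, complementOn_of_mem hp, hXY p hp, add_right_comm]

end Squares

section Switching
variable {n k : ℕ} {F : Fin k → Fin n → Fin n → Fin 2} {i0 i j : Fin k}
  {C : Finset (Fin n × Fin n)}

def IsSwitched (F : Fin k → Fin n → Fin n → Fin 2) (i0 : Fin k) (C : Finset (Fin n × Fin n))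
    (i : Fin k) : Prop :=
  (∀ p ∈ C, F i p.1 p.2 = F i0 p.1 p.2) ∨ (∀ p ∈ C, F i p.1 p.2 ≠ F i0 p.1 p.2)

theorem isSwitched_self : IsSwitched F i0 C i0 := Or.inl fun _ _ => rfl

theorem IsSwitched.exists_eq_add (h : IsSwitched F i0 C i) :
    ∃ e : Fin 2, ∀ p ∈ C, F i p.1 p.2 = F i0 p.1 p.2 + e := by
  rcases h with h | h
  · exact ⟨0, fun p hp => by rw [h p hp, add_zero]⟩
  · exact ⟨1, fun p hp => (by decide : ∀ x y : Fin 2, x ≠ y → x = y + 1) _ _ (h p hp)⟩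

theorem switchOn_of_isSwitched (h : IsSwitched F i0 C i) :
    switchOn n k F i0 C i = complementOn C (F i) := by
  funext r c
  simp only [switchOn, complementOn]
  exact if_congr (and_iff_right h) rfl rfl

theorem switchOn_of_not_isSwitched (h : ¬ IsSwitched F i0 C i) :
    switchOn n k F i0 C i = F i := by
  funext r c
  exact if_neg fun h' => h h'.1

theorem isBalancedOn_of_isMOFS_switchOn (hF : IsMOFS n k F)
    (hG : IsMOFS n k (switchOn n k F i0 C)) :
    (∀ r, IsBalancedOn (C.filter (·.1 = r)) fun p => F i0 p.1 p.2) ∧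
      (∀ c, IsBalancedOn (C.filter (·.2 = c)) fun p => F i0 p.1 p.2) ∧
      ∀ j, ¬ IsSwitched F i0 C j →
        IsBalancedOn (C.filter fun p => F j p.1 p.2 = 1) fun p => F i0 p.1 p.2 := by
  have hG₀ : switchOn n k F i0 C i0 = complementOn C (F i0) :=
    switchOn_of_isSwitched isSwitched_self
  obtain ⟨hrow, hcol⟩ := (isFreqSquare_complementOn_iff (hF.1 i0)).1 (hG₀ ▸ hG.1 i0)
  refine ⟨hrow, hcol, fun j hj => ?_⟩
  have hne : i0 ≠ j := by
    rintro rfl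
    exact hj isSwitched_self
  have horth := hG.2 i0 j hne
  rw [hG₀, switchOn_of_not_isSwitched hj, orthFS_complementOn_left_iff (hF.2 i0 j hne)] at horth
  exact horth 1

theorem isFreqSquare_switchOn (hF : IsFreqSquare n (F i))
    (hrow : ∀ r, IsBalancedOn (C.filter (·.1 = r)) fun p => F i0 p.1 p.2)
    (hcol : ∀ c, IsBalancedOn (C.filter (·.2 = c)) fun p => F i0 p.1 p.2) :
    IsFreqSquare n (switchOn n k F i0 C i) := by
  by_cases hi : IsSwitched F i0 C i
  · obtain ⟨e, he⟩ := hi.exists_eq_add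
    rw [switchOn_of_isSwitched hi, isFreqSquare_complementOn_iff hF]
    exact ⟨fun r => (hrow r).of_eq_add e fun p hp => he p (mem_filter.1 hp).1,
      fun c => (hcol c).of_eq_add e fun p hp => he p (mem_filter.1 hp).1⟩
  · rwa [switchOn_of_not_isSwitched hi]

theorem orthFS_switchOn_of_isSwitched_of_not_isSwitched (hF : OrthFS n (F i) (F j))
    (hi : IsSwitched F i0 C i) (hj : ¬ IsSwitched F i0 C j)
    (hfix : ∀ b, IsBalancedOn (C.filter fun p => F j p.1 p.2 = b) fun p => F i0 p.1 p.2) :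
    OrthFS n (switchOn n k F i0 C i) (switchOn n k F i0 C j) := by
  obtain ⟨e, he⟩ := hi.exists_eq_add
  rw [switchOn_of_isSwitched hi, switchOn_of_not_isSwitched hj, orthFS_complementOn_left_iff hF]
  exact fun b => (hfix b).of_eq_add e fun p hp => he p (mem_filter.1 hp).1

theorem orthFS_switchOn (hF : IsMOFS n k F) (hij : i ≠ j)
    (htot : IsBalancedOn C fun p => F i0 p.1 p.2)
    (hfix : ∀ j, ¬ IsSwitched F i0 C j → ∀ b,
      IsBalancedOn (C.filter fun p => F j p.1 p.2 = b) fun p => F i0 p.1 p.2) :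
    OrthFS n (switchOn n k F i0 C i) (switchOn n k F i0 C j) := by
  by_cases hi : IsSwitched F i0 C i <;> by_cases hj : IsSwitched F i0 C j
  · obtain ⟨ei, hei⟩ := hi.exists_eq_add
    obtain ⟨ej, hej⟩ := hj.exists_eq_add
    rw [switchOn_of_isSwitched hi, switchOn_of_isSwitched hj]
    refine (hF.2 i j hij).complementOn (htot.of_eq_add ej hej) (ei + ej) fun p hp => ?_
    rw [hei p hp, hej p hp]
    exact (by decide : ∀ x a b : Fin 2, x + a = x + b + (a + b)) _ _ _
  · exact orthFS_switchOn_of_isSwitched_of_not_isSwitched (hF.2 i j hij) hi hj (hfix j hj)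
  · exact (orthFS_switchOn_of_isSwitched_of_not_isSwitched (hF.2 j i hij.symm) hj hi
      (hfix i hi)).symm
  · rw [switchOn_of_not_isSwitched hi, switchOn_of_not_isSwitched hj]
    exact hF.2 i j hij

theorem isMOFS_switchOn_of_isBalancedOn (hF : IsMOFS n k F)
    (hrow : ∀ r, IsBalancedOn (C.filter (·.1 = r)) fun p => F i0 p.1 p.2)
    (hcol : ∀ c, IsBalancedOn (C.filter (·.2 = c)) fun p => F i0 p.1 p.2)
    (hfix : ∀ j, ¬ IsSwitched F i0 C j →
      IsBalancedOn (C.filter fun p => F j p.1 p.2 = 1) fun p => F i0 p.1 p.2) :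
    IsMOFS n k (switchOn n k F i0 C) := by
  have htot : IsBalancedOn C fun p => F i0 p.1 p.2 := IsBalancedOn.of_fibers Prod.fst hrow
  have hfix' : ∀ j, ¬ IsSwitched F i0 C j → ∀ b,
      IsBalancedOn (C.filter fun p => F j p.1 p.2 = b) fun p => F i0 p.1 p.2 := by
    intro j hj
    rw [Fin.forall_fin_two]
    exact ⟨htot.filter_eq_zero_of_filter_eq_one (hfix j hj), hfix j hj⟩
  exact ⟨fun i => isFreqSquare_switchOn (hF.1 i) hrow hcol,
    fun i j hij => orthFS_switchOn hF hij htot hfix'⟩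

theorem isMOFS_switchOn_iff (hF : IsMOFS n k F) :
    IsMOFS n k (switchOn n k F i0 C) ↔
      (∀ r, IsBalancedOn (C.filter (·.1 = r)) fun p => F i0 p.1 p.2) ∧
      (∀ c, IsBalancedOn (C.filter (·.2 = c)) fun p => F i0 p.1 p.2) ∧
      ∀ j, ¬ IsSwitched F i0 C j →
        IsBalancedOn (C.filter fun p => F j p.1 p.2 = 1) fun p => F i0 p.1 p.2 :=
  ⟨isBalancedOn_of_isMOFS_switchOn hF, fun ⟨hrow, hcol, hfix⟩ =>
    isMOFS_switchOn_of_isBalancedOn hF hrow hcol hfix⟩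

end Switching

theorem stmt_17_general (n k : ℕ) (hk : 0 < k)
    (F : Fin k → Fin n → Fin n → Fin 2)
    (hmofs : IsMOFS n k F)
    (C : Finset (Fin n × Fin n)) :
    IsMOFS n k (switchOn n k F ⟨0, hk⟩ C) ↔
      ((∀ r : Fin n,
        (C.filter fun p => p.1 = r ∧ F ⟨0, hk⟩ p.1 p.2 = 0).card =
        (C.filter fun p => p.1 = r ∧ F ⟨0, hk⟩ p.1 p.2 = 1).card) ∧
       (∀ c : Fin n,
        (C.filter fun p => p.2 = c ∧ F ⟨0, hk⟩ p.1 p.2 = 0).card =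
        (C.filter fun p => p.2 = c ∧ F ⟨0, hk⟩ p.1 p.2 = 1).card) ∧
       (∀ j : Fin k,
        ¬ ((∀ p ∈ C, F j p.1 p.2 = F ⟨0, hk⟩ p.1 p.2) ∨
           (∀ p ∈ C, F j p.1 p.2 ≠ F ⟨0, hk⟩ p.1 p.2)) →
        (C.filter fun p => F ⟨0, hk⟩ p.1 p.2 = 1 ∧ F j p.1 p.2 = 1).card =
        (C.filter fun p => F ⟨0, hk⟩ p.1 p.2 = 0 ∧ F j p.1 p.2 = 1).card)) := by
  rw [isMOFS_switchOn_iff hmofs]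
  simp only [isBalancedOn_filter_iff, IsSwitched]
  refine and_congr_right' (and_congr_right' (forall₂_congr fun j _ => ?_))
  rw [eq_comm]
  simp only [and_comm]

/-- Characterisation of basic trades: switching the cells of a nonempty set C
(in every square agreeing or disagreeing with F_1 on all of C) again yields a
set of MOFS if and only if (1) each row and each column of F_1 contains
equally many zeros and ones among the cells of C, and (2) for every square
F_j that is left unswitched, the number of cells of C with F_1 = 1 and
F_j = 1 equals the number with F_1 = 0 and F_j = 1. -/
theorem stmt_17 (n k : ℕ) (hk : 0 < k)
    (F : Fin k → Fin n → Fin n → Fin 2)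
    (hmofs : IsMOFS n k F)
    (C : Finset (Fin n × Fin n)) (hC : C.Nonempty) :
    IsMOFS n k (switchOn n k F ⟨0, hk⟩ C) ↔
      ((∀ r : Fin n,
        (C.filter fun p => p.1 = r ∧ F ⟨0, hk⟩ p.1 p.2 = 0).card =
        (C.filter fun p => p.1 = r ∧ F ⟨0, hk⟩ p.1 p.2 = 1).card) ∧
       (∀ c : Fin n,
        (C.filter fun p => p.2 = c ∧ F ⟨0, hk⟩ p.1 p.2 = 0).card =
        (C.filter fun p => p.2 = c ∧ F ⟨0, hk⟩ p.1 p.2 = 1).card) ∧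
       (∀ j : Fin k,
        ¬ ((∀ p ∈ C, F j p.1 p.2 = F ⟨0, hk⟩ p.1 p.2) ∨
           (∀ p ∈ C, F j p.1 p.2 ≠ F ⟨0, hk⟩ p.1 p.2)) →
        (C.filter fun p => F ⟨0, hk⟩ p.1 p.2 = 1 ∧ F j p.1 p.2 = 1).card =
        (C.filter fun p => F ⟨0, hk⟩ p.1 p.2 = 0 ∧ F j p.1 p.2 = 1).card)) :=
  stmt_17_general n k hk F hmofs C
end
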